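/- arXiv:1605.06440 — 9 statements merged into one kernel-verified Lean document; each statement's English description precedes it below -/
import Mathlib

section
/- Let R be a commutative ring, p a prime, and σ : R → R a ring endomorphism with σ(a) ≡ a^p (mod pR) for all a ∈ R. Define δ_s(a) ∈ R recursively by a^(p^s - 1) = Σ_{i=1}^{s} δ_i(a) · σ^i(a^(p^{s-i} - 1)). Then δ_s(a) ∈ p^{s-1} R for every s ≥ 1. -/
/-- Lemma 1(i) of the paper. `δ s a ∈ p^(s-1) R`. -/
theorem delta_divisibility {R : Type*} [CommRing R] (p : ℕ) (hp : p.Prime)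
    (σ : R →+* R) (hσ : ∀ r : R, σ r - r ^ p ∈ Ideal.span {(p : R)})
    (a : R) (δ : ℕ → R)
    (hδ : ∀ s : ℕ, 1 ≤ s →
      a ^ (p ^ s - 1) = ∑ i ∈ Finset.Icc 1 s, δ i * (⇑σ)^[i] (a ^ (p ^ (s - i) - 1)))
    (s : ℕ) (hs : 1 ≤ s) :
    δ s ∈ Ideal.span {(p : R) ^ (s - 1)} := by
  have hσ' : ∀ r : R, (p : R) ∣ σ r - r ^ p := fun r =>
    Ideal.mem_span_singleton.1 (hσ r)
  have hp2 : 2 ≤ p := hp.two_le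
  -- σ^[i] a ≡ a^(p^i) mod p
  have L1 : ∀ i : ℕ, (p : R) ∣ (⇑σ)^[i] a - a ^ p ^ i := by
    intro i
    induction i with
    | zero => simp
    | succ i ih =>
      have h2 : (p : R) ∣ ((⇑σ)^[i] a) ^ p - (a ^ p ^ i) ^ p :=
        ih.trans (sub_dvd_pow_sub_pow _ _ p)
      have heq : σ ((⇑σ)^[i] a) - a ^ p ^ (i + 1) =
          (σ ((⇑σ)^[i] a) - ((⇑σ)^[i] a) ^ p) + (((⇑σ)^[i] a) ^ p - (a ^ p ^ i) ^ p) := by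
        rw [← pow_mul, ← pow_succ]
        ring
      rw [Function.iterate_succ_apply', heq]
      exact dvd_add (hσ' _) h2
  -- (σ^[i] a)^(p^k) ≡ a^(p^(i+k)) mod p^(k+1)
  have L2 : ∀ i k : ℕ, (p : R) ^ (k + 1) ∣ ((⇑σ)^[i] a) ^ p ^ k - a ^ p ^ (i + k) := by
    intro i k
    have h := dvd_sub_pow_of_dvd_sub (L1 i) k
    rwa [← pow_mul, ← pow_add] at h
  suffices H : ∀ s : ℕ, 1 ≤ s → (p : R) ^ (s - 1) ∣ δ s by
    rw [Ideal.mem_span_singleton]; exact H s hs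
  clear hs s
  intro s
  induction s using Nat.strong_induction_on with
  | _ s IH =>
    intro hs1
    obtain ⟨t, rfl⟩ : ∃ t, s = t + 1 := ⟨s - 1, by omega⟩
    rcases Nat.eq_zero_or_pos t with rfl | ht
    · simp
    simp only [Nat.add_sub_cancel]
    have E1 := hδ (t + 1) (by omega)
    have E2 := hδ t ht
    rw [Finset.sum_Icc_succ_top (by omega : 1 ≤ t + 1)] at E1
    have hlast : δ (t + 1) * (⇑σ)^[t + 1] (a ^ (p ^ (t + 1 - (t + 1)) - 1)) = δ (t + 1) := by
      simp
    rw [hlast] at E1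
    have hδt1 : δ (t + 1) =
        a ^ (p ^ (t + 1) - 1) - ∑ i ∈ Finset.Icc 1 t, δ i * (⇑σ)^[i] (a ^ (p ^ (t + 1 - i) - 1)) := by
      rw [E1]; ring
    have hexp : p ^ t - 1 + p ^ t * (p - 1) = p ^ (t + 1) - 1 := by
      have h1 : 1 ≤ p ^ t := Nat.one_le_pow _ _ (by omega)
      have h2 : p ^ t * (p - 1) + p ^ t = p ^ t * p := by
        rw [← Nat.mul_succ]; congr 1; omega
      have h3 : p ^ (t + 1) = p ^ t * p := pow_succ p t
      omega
    have key : (p : R) ^ t ∣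
        (∑ i ∈ Finset.Icc 1 t, δ i * (⇑σ)^[i] (a ^ (p ^ (t + 1 - i) - 1)))
          - a ^ (p ^ (t + 1) - 1) := by
      have hsum : (∑ i ∈ Finset.Icc 1 t, δ i * (⇑σ)^[i] (a ^ (p ^ (t + 1 - i) - 1)))
            - a ^ (p ^ (t + 1) - 1)
          = ∑ i ∈ Finset.Icc 1 t,
              (δ i * (⇑σ)^[i] (a ^ (p ^ (t + 1 - i) - 1))
                - δ i * (⇑σ)^[i] (a ^ (p ^ (t - i) - 1)) * a ^ (p ^ t * (p - 1))) := by
        rw [Finset.sum_sub_distrib, ← Finset.sum_mul, ← E2, ← pow_add, hexp]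
      rw [hsum]
      apply Finset.dvd_sum
      intro i hi
      obtain ⟨hi1, hi2⟩ := Finset.mem_Icc.1 hi
      obtain ⟨d, hd⟩ := IH i (by omega) hi1
      have hexpA : p ^ (t + 1 - i) - 1 = p ^ (t - i) - 1 + p ^ (t - i) * (p - 1) := by
        have h1 : 1 ≤ p ^ (t - i) := Nat.one_le_pow _ _ (by omega)
        have h2 : p ^ (t - i) * (p - 1) + p ^ (t - i) = p ^ (t - i) * p := by
          rw [← Nat.mul_succ]; congr 1; omega
        have h3 : p ^ (t + 1 - i) = p ^ (t - i) * p := by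
          rw [← pow_succ]; congr 1; omega
        omega
      have hL2 := L2 i (t - i)
      rw [show i + (t - i) = t by omega] at hL2
      have hdiff : (p : R) ^ (t - i + 1) ∣
          (((⇑σ)^[i] a) ^ p ^ (t - i)) ^ (p - 1) - (a ^ p ^ t) ^ (p - 1) :=
        hL2.trans (sub_dvd_pow_sub_pow _ _ _)
      have hterm : δ i * (⇑σ)^[i] (a ^ (p ^ (t + 1 - i) - 1))
            - δ i * (⇑σ)^[i] (a ^ (p ^ (t - i) - 1)) * a ^ (p ^ t * (p - 1))
          = δ i * ((⇑σ)^[i] (a ^ (p ^ (t - i) - 1)) *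
              ((((⇑σ)^[i] a) ^ p ^ (t - i)) ^ (p - 1) - (a ^ p ^ t) ^ (p - 1))) := by
        rw [hexpA, pow_add, pow_mul, pow_mul]
        simp only [iterate_map_mul, iterate_map_pow]
        ring
      have hsplit : (p : R) ^ t = (p : R) ^ (i - 1) * (p : R) ^ (t - i + 1) := by
        rw [← pow_add]; congr 1; omega
      rw [hterm, hsplit]
      exact mul_dvd_mul ⟨d, hd⟩ (hdiff.mul_left _)
    rw [hδt1, show a ^ (p ^ (t + 1) - 1)
          - ∑ i ∈ Finset.Icc 1 t, δ i * (⇑σ)^[i] (a ^ (p ^ (t + 1 - i) - 1))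
        = -((∑ i ∈ Finset.Icc 1 t, δ i * (⇑σ)^[i] (a ^ (p ^ (t + 1 - i) - 1)))
            - a ^ (p ^ (t + 1) - 1)) by ring]
    exact dvd_neg.2 key
end

section
/- Let R be a commutative ring, p a prime, σ : R → R a Frobenius endomorphism (σ(a) ≡ a^p mod pR), and δ_s(a) defined recursively by a^(p^s-1) = Σ_{i=1}^{s} δ_i(a)·σ^i(a^(p^{s-i}-1)). Then for all m, s ≥ 1, a^(m·p^s − 1) − Σ_{i=1}^{s} δ_i(a)·σ^i(a^(m·p^{s-i} − 1)) ∈ p^s R. -/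
private lemma nat_exp_split (m q : ℕ) (hm : 1 ≤ m) (hq : 1 ≤ q) :
    m * q - 1 = (q - 1) + (m - 1) * q := by
  cases m with
  | zero => omega
  | succ n =>
    have h : (n + 1) * q = n * q + q := by ring
    simp only [Nat.add_sub_cancel]
    rw [h]
    generalize n * q = t
    omega

private lemma frob_iter {R : Type*} [CommRing R] (p : ℕ) (σ : R →+* R)
    (hσ : ∀ r : R, σ r - r ^ p ∈ Ideal.span {(p : R)}) :
    ∀ (i j : ℕ) (x : R), (p : R) ^ (j + 1) ∣ (⇑σ)^[i] (x ^ p ^ j) - x ^ p ^ (i + j) := by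
  intro i
  induction i with
  | zero => intro j x; simp
  | succ i ih =>
    intro j x
    have h1 : (⇑σ)^[i+1] (x ^ p ^ j) = (⇑σ)^[i] ((σ x) ^ p ^ j) := by
      rw [Function.iterate_succ_apply, map_pow]
    have h2 := ih j (σ x)
    have h3 : (p : R) ∣ σ x - x ^ p := Ideal.mem_span_singleton.1 (hσ x)
    have h4 : (p : R) ^ (i + j + 1) ∣ (σ x) ^ p ^ (i + j) - (x ^ p) ^ p ^ (i + j) :=
      dvd_sub_pow_of_dvd_sub h3 (i + j)
    have h5 : (x ^ p) ^ p ^ (i + j) = x ^ p ^ (i + 1 + j) := by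
      rw [← pow_mul]
      congr 1
      rw [show i + 1 + j = (i + j) + 1 by omega, pow_succ]
      ring
    have h6 : (p : R) ^ (j + 1) ∣ (σ x) ^ p ^ (i + j) - x ^ p ^ (i + 1 + j) := by
      rw [← h5]
      exact dvd_trans (pow_dvd_pow _ (by omega)) h4
    have := dvd_add h2 h6
    rw [h1]
    convert this using 1
    ring

private lemma iter_mul {R : Type*} [CommRing R] (σ : R →+* R) (i : ℕ) (x y : R) :
    (⇑σ)^[i] (x * y) = (⇑σ)^[i] x * (⇑σ)^[i] y := by
  induction i generalizing x y with
  | zero => rfl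
  | succ n ih => simp [Function.iterate_succ_apply, map_mul, ih]

private lemma P_aux {R : Type*} [CommRing R] (p : ℕ) (hp : p.Prime)
    (σ : R →+* R) (hσ : ∀ r : R, σ r - r ^ p ∈ Ideal.span {(p : R)})
    (a : R) (δ : ℕ → R)
    (hδ : ∀ s : ℕ, 1 ≤ s →
      a ^ (p ^ s - 1) = ∑ i ∈ Finset.Icc 1 s, δ i * (⇑σ)^[i] (a ^ (p ^ (s - i) - 1)))
    (s : ℕ) (hs : 1 ≤ s)
    (hQ : ∀ i, 1 ≤ i → i ≤ s → (p : R) ^ (i - 1) ∣ δ i)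
    (m : ℕ) (hm : 1 ≤ m) :
    (p : R) ^ s ∣ a ^ (m * p ^ s - 1) -
        ∑ i ∈ Finset.Icc 1 s, δ i * (⇑σ)^[i] (a ^ (m * p ^ (s - i) - 1)) := by
  have hps : 1 ≤ p ^ s := Nat.one_le_pow _ _ hp.pos
  have e1 : a ^ (m * p ^ s - 1) = a ^ (p ^ s - 1) * (a ^ (m - 1)) ^ p ^ s := by
    rw [← pow_mul, ← pow_add, nat_exp_split m (p ^ s) hm hps]
  rw [e1, hδ s hs, Finset.sum_mul, ← Finset.sum_sub_distrib]
  apply Finset.dvd_sum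
  intro i hi
  obtain ⟨hi1, hi2⟩ := Finset.mem_Icc.1 hi
  have hpsi : 1 ≤ p ^ (s - i) := Nat.one_le_pow _ _ hp.pos
  have e2 : a ^ (m * p ^ (s - i) - 1) = a ^ (p ^ (s - i) - 1) * (a ^ (m - 1)) ^ p ^ (s - i) := by
    rw [← pow_mul, ← pow_add, nat_exp_split m (p ^ (s - i)) hm hpsi]
  have e3 : (⇑σ)^[i] (a ^ (m * p ^ (s - i) - 1)) =
      (⇑σ)^[i] (a ^ (p ^ (s - i) - 1)) * (⇑σ)^[i] ((a ^ (m - 1)) ^ p ^ (s - i)) := by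
    rw [e2, iter_mul σ]
  have key : (p : R) ^ (s - i + 1) ∣
      (a ^ (m - 1)) ^ p ^ s - (⇑σ)^[i] ((a ^ (m - 1)) ^ p ^ (s - i)) := by
    have := frob_iter p σ hσ i (s - i) (a ^ (m - 1))
    rw [show i + (s - i) = s by omega] at this
    exact (dvd_sub_comm).1 this
  have hδi := hQ i hi1 hi2
  have factored : δ i * (⇑σ)^[i] (a ^ (p ^ (s - i) - 1)) * (a ^ (m - 1)) ^ p ^ s -
      δ i * (⇑σ)^[i] (a ^ (m * p ^ (s - i) - 1)) =
      δ i * ((⇑σ)^[i] (a ^ (p ^ (s - i) - 1)) *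
        ((a ^ (m - 1)) ^ p ^ s - (⇑σ)^[i] ((a ^ (m - 1)) ^ p ^ (s - i)))) := by
    rw [e3]; ring
  rw [factored]
  have : (p : R) ^ (i - 1) * (p : R) ^ (s - i + 1) ∣
      δ i * ((⇑σ)^[i] (a ^ (p ^ (s - i) - 1)) *
        ((a ^ (m - 1)) ^ p ^ s - (⇑σ)^[i] ((a ^ (m - 1)) ^ p ^ (s - i)))) :=
    mul_dvd_mul hδi (key.mul_left _)
  rwa [← pow_add, show i - 1 + (s - i + 1) = s by omega] at this

private lemma Q_aux {R : Type*} [CommRing R] (p : ℕ) (hp : p.Prime)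
    (σ : R →+* R) (hσ : ∀ r : R, σ r - r ^ p ∈ Ideal.span {(p : R)})
    (a : R) (δ : ℕ → R)
    (hδ : ∀ s : ℕ, 1 ≤ s →
      a ^ (p ^ s - 1) = ∑ i ∈ Finset.Icc 1 s, δ i * (⇑σ)^[i] (a ^ (p ^ (s - i) - 1))) :
    ∀ s, 1 ≤ s → (p : R) ^ (s - 1) ∣ δ s := by
  intro s
  induction s using Nat.strong_induction_on with
  | _ s ih =>
    intro hs
    match s, hs with
    | 1, _ => simp
    | (t + 2), _ =>
      set u := t + 1 with hu
      have hu1 : 1 ≤ u := by omega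
      have hP := P_aux p hp σ hσ a δ hδ u hu1
        (fun i h1 h2 => ih i (by omega) h1) p hp.one_le
      have hsum : ∑ i ∈ Finset.Icc 1 u, δ i * (⇑σ)^[i] (a ^ (p * p ^ (u - i) - 1)) =
          ∑ i ∈ Finset.Icc 1 u, δ i * (⇑σ)^[i] (a ^ (p ^ (u + 1 - i) - 1)) := by
        apply Finset.sum_congr rfl
        intro i hi
        obtain ⟨hi1, hi2⟩ := Finset.mem_Icc.1 hi
        congr 3
        rw [show u + 1 - i = (u - i) + 1 by omega, pow_succ]
        ring
      have hpow : p * p ^ u = p ^ (u + 1) := by rw [pow_succ]; ring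
      rw [hpow, hsum] at hP
      have hδs := hδ (u + 1) (by omega)
      rw [Finset.sum_Icc_succ_top (by omega : 1 ≤ u + 1)] at hδs
      have hlast : δ (u + 1) * (⇑σ)^[u + 1] (a ^ (p ^ (u + 1 - (u + 1)) - 1)) = δ (u + 1) := by
        simp
      rw [hlast] at hδs
      have : a ^ (p ^ (u + 1) - 1) -
          ∑ i ∈ Finset.Icc 1 u, δ i * (⇑σ)^[i] (a ^ (p ^ (u + 1 - i) - 1)) = δ (u + 1) := by
        rw [hδs]; ring
      rw [this] at hP
      simpa [hu] using hP

/-- Lemma 1(ii) of the paper. -/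
theorem delta_congruence {R : Type*} [CommRing R] (p : ℕ) (hp : p.Prime)
    (σ : R →+* R) (hσ : ∀ r : R, σ r - r ^ p ∈ Ideal.span {(p : R)})
    (a : R) (δ : ℕ → R)
    (hδ : ∀ s : ℕ, 1 ≤ s →
      a ^ (p ^ s - 1) = ∑ i ∈ Finset.Icc 1 s, δ i * (⇑σ)^[i] (a ^ (p ^ (s - i) - 1)))
    (m s : ℕ) (hm : 1 ≤ m) (hs : 1 ≤ s) :
    a ^ (m * p ^ s - 1) -
        ∑ i ∈ Finset.Icc 1 s, δ i * (⇑σ)^[i] (a ^ (m * p ^ (s - i) - 1)) ∈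
      Ideal.span {(p : R) ^ s} := by
  rw [Ideal.mem_span_singleton]
  exact P_aux p hp σ hσ a δ hδ s hs
    (fun i h1 h2 => Q_aux p hp σ hσ a δ hδ i h1) m hm
end

section
/- Let R be a commutative ring, p prime, D : R → R a derivation, and σ : R → R a ring endomorphism with σ(a) ≡ a^p mod pR for all a. Then for every a ∈ R and every m ≥ 1, D(σ^m(a)) ∈ p^m R. -/
/-- Lemma 4 of the paper: `D (σ^m a) ∈ p^m R` for a derivation `D`
and a Frobenius lift `σ`. -/
theorem derivation_frobenius_divisibility {R : Type*} [CommRing R] (p : ℕ) (hp : p.Prime)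
    (D : R → R) (hDadd : ∀ x y : R, D (x + y) = D x + D y)
    (hDmul : ∀ x y : R, D (x * y) = D x * y + x * D y)
    (σ : R →+* R) (hσ : ∀ r : R, σ r - r ^ p ∈ Ideal.span {(p : R)})
    (a : R) (m : ℕ) (hm : 1 ≤ m) :
    D ((⇑σ)^[m] a) ∈ Ideal.span {(p : R) ^ m} := by
  have hD1 : D 1 = 0 := by
    have h := hDmul 1 1
    simp only [mul_one, one_mul] at h
    exact (left_eq_add.mp h)
  have hDnat : ∀ n : ℕ, D (n : R) = 0 := by
    intro n
    induction n with
    | zero =>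
      have h := hDadd 0 0
      simp only [add_zero] at h
      simpa using (left_eq_add.mp h)
    | succ n ih =>
      push_cast
      rw [hDadd, ih, hD1, add_zero]
  have hpow : ∀ (n : ℕ) (x : R), D (x ^ (n + 1)) = (n + 1 : ℕ) * x ^ n * D x := by
    intro n
    induction n with
    | zero => intro x; simp
    | succ n ih =>
      intro x
      rw [pow_succ, hDmul, ih, pow_succ]
      push_cast
      ring
  have key : ∀ (k : ℕ) (b : R), D ((⇑σ)^[k] b) ∈ Ideal.span {(p : R) ^ k} := by
    intro k
    induction k with
    | zero =>
      intro b
      simp [Ideal.span_singleton_one]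
    | succ k ih =>
      intro b
      obtain ⟨c, hc⟩ := Ideal.mem_span_singleton'.mp (hσ b)
      have hσb : σ b = b ^ p + (p : R) * c := by
        linear_combination -hc
      have hiter : (⇑σ)^[k + 1] b = ((⇑σ)^[k] b) ^ p + (p : R) * ((⇑σ)^[k] c) := by
        rw [Function.iterate_succ_apply, hσb, ← RingHom.coe_pow, map_add, map_mul, map_pow,
          map_natCast, RingHom.coe_pow]
      obtain ⟨r, hr⟩ := Ideal.mem_span_singleton'.mp (ih b)
      obtain ⟨s, hs⟩ := Ideal.mem_span_singleton'.mp (ih c)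
      have hp1 : p - 1 + 1 = p := Nat.succ_pred_eq_of_pos hp.pos
      rw [hiter, hDadd, ← hp1, hpow, hDmul, hDnat, hp1]
      refine Ideal.mem_span_singleton'.mpr ⟨((⇑σ)^[k] b) ^ (p - 1) * r + s, ?_⟩
      rw [← hr, ← hs]; ring
  exact key m a
end

section
/- Let f be a Laurent polynomial in n variables over a commutative ring R, p a prime, σ the Frobenius endomorphism on R[x₁^{±1},...,xₙ^{±1}] extending a Frobenius σ on R by σ(x_i) = x_i^p, and δ_s(f) defined recursively by f^(p^s - 1) = Σ_{i=1}^{s} δ_i(f)·σ^i(f^(p^{s-i}-1)). Then the Newton polytope of δ_s(f) is contained in (p^s − 1)·Δ(f), where Δ(f) is the Newton polytope of f. -/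
/-!
Multiplying Laurent polynomials adds Newton polytopes (up to inclusion), and `σ` scales them
by `p`. Solving the defining relation for `δ s` expresses it as `f ^ (p ^ s - 1)` minus terms
`δ i * σ^i (f ^ (p ^ (s - i) - 1))` with `i < s`; by strong induction the polytope of such a
term lies in `(p ^ i - 1) • Δ(f) + p ^ i • (p ^ (s - i) - 1) • Δ(f) = (p ^ s - 1) • Δ(f)`,
the last equality because `Δ(f)` is convex.
-/

open Pointwise

theorem delta_eq_pow_sub_sum {A : Type*} [Ring A] {σ' : A →+* A} {f : A} {δ : ℕ → A} {p : ℕ}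
    (hδ : ∀ s : ℕ, 1 ≤ s →
      f ^ (p ^ s - 1) = ∑ i ∈ Finset.Icc 1 s, δ i * (⇑σ')^[i] (f ^ (p ^ (s - i) - 1)))
    {s : ℕ} (hs : 1 ≤ s) :
    δ s = f ^ (p ^ s - 1) - ∑ i ∈ Finset.Ico 1 s, δ i * (⇑σ')^[i] (f ^ (p ^ (s - i) - 1)) := by
  rw [hδ s hs, ← Finset.sum_Ico_add_eq_sum_Icc hs, Nat.sub_self, pow_zero, Nat.sub_self,
    pow_zero, Function.iterate_fixed (map_one σ'), mul_one, add_sub_cancel_left]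

namespace AddMonoidAlgebra

variable {R M E : Type*} [AddCommGroup E] [Module ℝ E]

section AddMonoid

variable [AddMonoid M] (φ : M →+ E)

def newtonPolytope [Semiring R] (g : AddMonoidAlgebra R M) : Set E :=
  convexHull ℝ (φ '' g.coeff.support)

section Semiring

variable [Semiring R]

theorem convex_newtonPolytope (g : AddMonoidAlgebra R M) : Convex ℝ (newtonPolytope φ g) :=
  convex_convexHull ℝ _

variable {φ}

theorem map_mem_newtonPolytope {g : AddMonoidAlgebra R M} {u : M} (hu : u ∈ g.coeff.support) :
    φ u ∈ newtonPolytope φ g :=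
  subset_convexHull ℝ _ (Set.mem_image_of_mem φ hu)

theorem newtonPolytope_subset_of_forall {g : AddMonoidAlgebra R M} {C : Set E}
    (hC : Convex ℝ C) (h : ∀ u ∈ g.coeff.support, φ u ∈ C) : newtonPolytope φ g ⊆ C :=
  convexHull_min (by rintro _ ⟨u, hu, rfl⟩; exact h u hu) hC

theorem newtonPolytope_single_subset (u : M) (r : R) :
    newtonPolytope φ (single u r) ⊆ {φ u} :=
  newtonPolytope_subset_of_forall (convex_singleton _) fun _ hv ↦ by
    rw [Finset.mem_singleton.mp (Finsupp.support_single_subset hv)]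
    rfl

theorem newtonPolytope_sum_subset {ι : Type*} {t : Finset ι} {g : ι → AddMonoidAlgebra R M}
    {C : Set E} (hC : Convex ℝ C) (h : ∀ i ∈ t, newtonPolytope φ (g i) ⊆ C) :
    newtonPolytope φ (∑ i ∈ t, g i) ⊆ C := by
  classical
  refine newtonPolytope_subset_of_forall hC fun u hu ↦ ?_
  rw [coeff_sum] at hu
  obtain ⟨i, hi, hu⟩ := Finset.mem_biUnion.mp (Finsupp.support_finsetSum hu)
  exact h i hi (map_mem_newtonPolytope hu)

theorem newtonPolytope_mul_subset (g h : AddMonoidAlgebra R M) :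
    newtonPolytope φ (g * h) ⊆ newtonPolytope φ g + newtonPolytope φ h := by
  classical
  refine newtonPolytope_subset_of_forall
    ((convex_newtonPolytope φ g).add (convex_newtonPolytope φ h)) fun u hu ↦ ?_
  obtain ⟨a, ha, b, hb, rfl⟩ := Finset.mem_add.mp (support_coeff_mul_subset g h hu)
  rw [map_add]
  exact Set.add_mem_add (map_mem_newtonPolytope ha) (map_mem_newtonPolytope hb)

theorem newtonPolytope_pow_subset (g : AddMonoidAlgebra R M) {k : ℕ} (hk : k ≠ 0) :
    newtonPolytope φ (g ^ k) ⊆ (k : ℝ) • newtonPolytope φ g := by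
  induction k, Nat.one_le_iff_ne_zero.mpr hk using Nat.le_induction with
  | base => simp
  | succ k hk ih =>
    calc newtonPolytope φ (g ^ (k + 1))
        ⊆ newtonPolytope φ (g ^ k) + newtonPolytope φ g := by
          rw [pow_succ]; exact newtonPolytope_mul_subset _ _
      _ ⊆ (k : ℝ) • newtonPolytope φ g + (1 : ℝ) • newtonPolytope φ g := by
          rw [one_smul]; exact Set.add_subset_add (ih (by omega)) subset_rfl
      _ = ((k + 1 : ℕ) : ℝ) • newtonPolytope φ g := by
          rw [← (convex_newtonPolytope φ g).add_smul (by positivity) zero_le_one]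
          push_cast; rfl

theorem newtonPolytope_pow_pow_sub_one_subset (g : AddMonoidAlgebra R M) {p m : ℕ}
    (hp : 2 ≤ p) (hm : m ≠ 0) :
    newtonPolytope φ (g ^ (p ^ m - 1)) ⊆ ((p : ℝ) ^ m - 1) • newtonPolytope φ g := by
  have hpm : 2 ≤ p ^ m := hp.trans (Nat.le_self_pow hm p)
  have := newtonPolytope_pow_subset (φ := φ) g (k := p ^ m - 1) (by omega)
  rwa [Nat.cast_sub (by omega), Nat.cast_pow, Nat.cast_one] at this

end Semiring

variable {φ}

theorem newtonPolytope_sub_subset [Ring R] {g h : AddMonoidAlgebra R M} {C : Set E}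
    (hC : Convex ℝ C) (hg : newtonPolytope φ g ⊆ C) (hh : newtonPolytope φ h ⊆ C) :
    newtonPolytope φ (g - h) ⊆ C := by
  classical
  refine newtonPolytope_subset_of_forall hC fun u hu ↦ ?_
  rw [coeff_sub] at hu
  rcases Finset.mem_union.mp (Finsupp.support_sub hu) with hu | hu
  exacts [hg (map_mem_newtonPolytope hu), hh (map_mem_newtonPolytope hu)]

end AddMonoid

section Frobenius

variable [Semiring R] [AddCommGroup M] {φ : M →+ E} {F : Type*}
  [FunLike F (AddMonoidAlgebra R M) (AddMonoidAlgebra R M)]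
  [AddMonoidHomClass F (AddMonoidAlgebra R M) (AddMonoidAlgebra R M)]
  {σ : R → R} {σ' : F} {c : ℤ}

theorem newtonPolytope_map_subset_smul
    (hσ' : ∀ (u : M) (r : R), σ' (single u r) = single (c • u) (σ r))
    (g : AddMonoidAlgebra R M) :
    newtonPolytope φ (σ' g) ⊆ (c : ℝ) • newtonPolytope φ g := by
  have hσ'g : σ' g = ∑ v ∈ g.coeff.support, single (c • v) (σ (g.coeff v)) := by
    conv_lhs => rw [← sum_coeff_single g]
    rw [Finsupp.sum, map_sum]
    exact Finset.sum_congr rfl fun v _ ↦ hσ' v _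
  rw [hσ'g]
  refine newtonPolytope_sum_subset ((convex_newtonPolytope φ g).smul _) fun v hv ↦ ?_
  refine (newtonPolytope_single_subset _ _).trans (Set.singleton_subset_iff.mpr ?_)
  rw [map_zsmul, ← Int.cast_smul_eq_zsmul ℝ]
  exact Set.smul_mem_smul_set (map_mem_newtonPolytope hv)

theorem newtonPolytope_iterate_map_subset_smul
    (hσ' : ∀ (u : M) (r : R), σ' (single u r) = single (c • u) (σ r))
    (g : AddMonoidAlgebra R M) (i : ℕ) :
    newtonPolytope φ ((⇑σ')^[i] g) ⊆ (c : ℝ) ^ i • newtonPolytope φ g := by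
  induction i with
  | zero => simp
  | succ i ih =>
    rw [Function.iterate_succ_apply', pow_succ', ← smul_smul]
    exact (newtonPolytope_map_subset_smul hσ' _).trans (Set.smul_set_mono ih)

end Frobenius

theorem newtonPolytope_delta_subset [CommRing R] [AddCommGroup M] {φ : M →+ E} {p : ℕ}
    (hp : 2 ≤ p) {σ : R → R} {σ' : AddMonoidAlgebra R M →+* AddMonoidAlgebra R M}
    (hσ' : ∀ (u : M) (r : R), σ' (single u r) = single ((p : ℤ) • u) (σ r))
    {f : AddMonoidAlgebra R M} {δ : ℕ → AddMonoidAlgebra R M}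
    (hδ : ∀ s : ℕ, 1 ≤ s →
      f ^ (p ^ s - 1) = ∑ i ∈ Finset.Icc 1 s, δ i * (⇑σ')^[i] (f ^ (p ^ (s - i) - 1)))
    {s : ℕ} (hs : 1 ≤ s) :
    newtonPolytope φ (δ s) ⊆ ((p : ℝ) ^ s - 1) • newtonPolytope φ f := by
  induction s using Nat.strong_induction_on with
  | _ s ih =>
  have hp1 : (1 : ℝ) ≤ p := by exact_mod_cast hp.trans' one_le_two
  have hC := (convex_newtonPolytope φ f).smul ((p : ℝ) ^ s - 1)
  rw [delta_eq_pow_sub_sum hδ hs]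
  refine newtonPolytope_sub_subset hC
    (newtonPolytope_pow_pow_sub_one_subset f hp (by omega))
    (newtonPolytope_sum_subset hC fun i hi ↦ ?_)
  obtain ⟨hi1, his⟩ := Finset.mem_Ico.mp hi
  have hσf := (newtonPolytope_iterate_map_subset_smul (φ := φ) hσ' (f ^ (p ^ (s - i) - 1)) i).trans
    (Set.smul_set_mono (newtonPolytope_pow_pow_sub_one_subset f hp (by omega)))
  rw [Int.cast_natCast, smul_smul] at hσf
  have hscale : ((p : ℝ) ^ i - 1) + (p : ℝ) ^ i * ((p : ℝ) ^ (s - i) - 1) = (p : ℝ) ^ s - 1 := by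
    rw [mul_sub, ← pow_add, Nat.add_sub_cancel' his.le]
    ring
  calc newtonPolytope φ (δ i * (⇑σ')^[i] (f ^ (p ^ (s - i) - 1)))
      ⊆ ((p : ℝ) ^ i - 1) • newtonPolytope φ f
          + ((p : ℝ) ^ i * ((p : ℝ) ^ (s - i) - 1)) • newtonPolytope φ f :=
        (newtonPolytope_mul_subset _ _).trans (Set.add_subset_add (ih i his hi1) hσf)
    _ = ((p : ℝ) ^ s - 1) • newtonPolytope φ f := by
        rw [← (convex_newtonPolytope φ f).add_smul (sub_nonneg.mpr (one_le_pow₀ hp1))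
          (mul_nonneg (by positivity) (sub_nonneg.mpr (one_le_pow₀ hp1))), hscale]

end AddMonoidAlgebra

theorem newton_polytope_delta_general {R : Type*} [CommRing R] {n : ℕ} (p : ℕ) (hp : p.Prime)
    (σ : R →+* R)
    (σ' : AddMonoidAlgebra R (Fin n → ℤ) →+* AddMonoidAlgebra R (Fin n → ℤ))
    (hσ' : ∀ (u : Fin n → ℤ) (r : R),
      σ' (AddMonoidAlgebra.single u r) = AddMonoidAlgebra.single ((p : ℤ) • u) (σ r))
    (f : AddMonoidAlgebra R (Fin n → ℤ))
    (δ : ℕ → AddMonoidAlgebra R (Fin n → ℤ))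
    (hδ : ∀ s : ℕ, 1 ≤ s →
      f ^ (p ^ s - 1) = ∑ i ∈ Finset.Icc 1 s, δ i * (⇑σ')^[i] (f ^ (p ^ (s - i) - 1)))
    -- the Newton polytope of a Laurent polynomial
    (Δ : AddMonoidAlgebra R (Fin n → ℤ) → Set (Fin n → ℝ))
    (hΔ : ∀ g : AddMonoidAlgebra R (Fin n → ℤ),
      Δ g = convexHull ℝ ((fun (w : Fin n → ℤ) (i : Fin n) => (w i : ℝ)) '' g.coeff.support))
    (s : ℕ) (hs : 1 ≤ s) :
    Δ (δ s) ⊆ ((p : ℝ) ^ s - 1) • Δ f := by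
  obtain rfl : Δ = AddMonoidAlgebra.newtonPolytope ((Int.castAddHom ℝ).compLeft (Fin n)) :=
    funext hΔ
  exact AddMonoidAlgebra.newtonPolytope_delta_subset hp.two_le hσ' hδ hs

/-- Lemma 2 of the paper: the Newton polytope of `δ s f` is contained
in `(p^s - 1) · Δ(f)`. Laurent polynomials in `n` variables are modelled as
`AddMonoidAlgebra R (Fin n → ℤ)`; the Newton polytope of `g` is the convex hull in
`ℝⁿ` of the support of `g`. -/
theorem newton_polytope_delta {R : Type*} [CommRing R] {n : ℕ} (p : ℕ) (hp : p.Prime)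
    (σ : R →+* R) (hσ : ∀ r : R, σ r - r ^ p ∈ Ideal.span {(p : R)})
    (σ' : AddMonoidAlgebra R (Fin n → ℤ) →+* AddMonoidAlgebra R (Fin n → ℤ))
    (hσ' : ∀ (u : Fin n → ℤ) (r : R),
      σ' (AddMonoidAlgebra.single u r) = AddMonoidAlgebra.single ((p : ℤ) • u) (σ r))
    (f : AddMonoidAlgebra R (Fin n → ℤ))
    (δ : ℕ → AddMonoidAlgebra R (Fin n → ℤ))
    (hδ : ∀ s : ℕ, 1 ≤ s →
      f ^ (p ^ s - 1) = ∑ i ∈ Finset.Icc 1 s, δ i * (⇑σ')^[i] (f ^ (p ^ (s - i) - 1)))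
    -- the Newton polytope of a Laurent polynomial
    (Δ : AddMonoidAlgebra R (Fin n → ℤ) → Set (Fin n → ℝ))
    (hΔ : ∀ g : AddMonoidAlgebra R (Fin n → ℤ),
      Δ g = convexHull ℝ ((fun (w : Fin n → ℤ) (i : Fin n) => (w i : ℝ)) '' g.coeff.support))
    (s : ℕ) (hs : 1 ≤ s) :
    Δ (δ s) ⊆ ((p : ℝ) ^ s - 1) • Δ f :=
  newton_polytope_delta_general p hp σ σ' hσ' f δ hδ Δ hΔ s hs
end

section
/- Let f be a Laurent polynomial over R with Newton polytope Δ(f), let J = Δ(f)° ∩ ℤⁿ be the set of interior lattice points, α_s the g×g matrix with (α_s)_{u,v} = coefficient of x^(p^s·v − u) in f^(p^s − 1), and γ_s the matrix with (γ_s)_{u,v} = coefficient of x^(p^s·v − u) in δ_s(f). Then α_s = γ_1·σ(α_{s-1}) + γ_2·σ²(α_{s-2}) + ... + γ_{s-1}·σ^{s-1}(α_1) + γ_s for all s ≥ 1, where σ acts entrywise on matrices, α_0 is the identity matrix, and δ_s(f) is defined by the recursion f^(p^s-1) = Σ_{i=1}^s δ_i(f)·σ^i(f^(p^{s-i}-1)).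 -/
/-!
Expanding `f^(p^s-1) = ∑ δ_i σ^i(f^(p^(s-i)-1))`, the coefficient of `x^(p^s v - u)` in
`δ_i σ^i(g)` is `∑_τ δ_i(p^s v - u - p^i τ) σ^i(g_τ)`; substituting `τ = p^(s-i) v - t` turns it
into `∑_t (γ_i)_{u,t} σ^i((α_{s-i})_{t,v})`, and only `t ∈ J` contribute. Indeed, inducting along
the recursion defining `δ`, the support of `δ_i` lies in `(p^i - 1) Δ`; so if `p^i t = w + u` with
`w` in that support and `u` interior to `Δ`, then `t = (w + u) / p^i` is interior to `Δ` too.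
-/

open Pointwise AddMonoidAlgebra

theorem Convex.inv_smul_add_mem_interior {E : Type*} [AddCommGroup E] [Module ℝ E]
    [TopologicalSpace E] [IsTopologicalAddGroup E] [ContinuousConstSMul ℝ E] {C : Set E}
    (hC : Convex ℝ C) {x y : E} {c : ℝ} (hc : 1 ≤ c) (hx : x ∈ interior C)
    (hy : y ∈ (c - 1) • C) : c⁻¹ • (y + x) ∈ interior C := by
  obtain ⟨d, hd, rfl⟩ := hy
  change c⁻¹ • ((c - 1) • d + x) ∈ interior C
  have key := hC.combo_interior_self_mem_interior hx hd (a := c⁻¹) (b := c⁻¹ * (c - 1))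
    (by positivity) (mul_nonneg (by positivity) (by linarith)) (by field_simp; ring)
  rwa [smul_add, smul_smul, add_comm]

namespace AddMonoidAlgebra

section NewtonPolytope

variable {R M E : Type*} [Semiring R] [AddMonoid M] [AddCommGroup E] (L : M →+ E)

theorem image_support_mul_subset (x y : R[M]) :
    L '' (x * y).coeff.support ⊆ L '' x.coeff.support + L '' y.coeff.support := by
  classical
  rw [← Set.image_add, ← Finset.coe_add]
  exact Set.image_mono (Finset.coe_subset.mpr (support_coeff_mul_subset x y))

theorem image_support_pow_subset [Module ℝ E] {f : R[M]} (hf : f.coeff.support.Nonempty) (k : ℕ) :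
    L '' (f ^ k).coeff.support ⊆ (k : ℝ) • convexHull ℝ (L '' f.coeff.support) := by
  induction k with
  | zero =>
    rw [Nat.cast_zero, Set.zero_smul_set (by simpa using hf), pow_zero, one_def]
    rintro _ ⟨w, hw, rfl⟩
    rw [Set.mem_zero, Finset.mem_singleton.mp (Finsupp.support_single_subset hw), map_zero]
  | succ k ih =>
    rw [pow_succ, Nat.cast_succ, (convex_convexHull ℝ _).add_smul k.cast_nonneg zero_le_one,
      one_smul]
    exact (image_support_mul_subset L _ _).trans
      (Set.add_subset_add ih (subset_convexHull ℝ _))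

end NewtonPolytope

theorem coeff_eq_mapDomain_mapRange {R S M N F : Type*} [Semiring R] [Semiring S]
    [FunLike F R[M] S[N]] [AddMonoidHomClass F R[M] S[N]] (Φ : F) (e : M → N) (φ : R →+ S)
    (hΦ : ∀ m r, Φ (single m r) = single (e m) (φ r)) (x : R[M]) :
    (Φ x).coeff = (x.coeff.mapRange φ φ.map_zero).mapDomain e := by
  induction x using induction_linear with
  | zero => simp
  | add x y hx hy =>
    rw [map_add, coeff_add, hx, hy, coeff_add, Finsupp.mapRange_add', Finsupp.mapDomain_add]
  | single m r => simp [hΦ]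

section FrobeniusLift

variable {R M : Type*} [Semiring R] [AddCommGroup M] (c : ℤ) (σ : R →+* R)
  (σ' : R[M] →+* R[M]) (hσ' : ∀ (u : M) (r : R), σ' (single u r) = single (c • u) (σ r))

include hσ' in
theorem iterate_frobeniusLift_single (i : ℕ) (u : M) (r : R) :
    (⇑σ')^[i] (single u r) = single (c ^ i • u) ((⇑σ)^[i] r) := by
  induction i with
  | zero => simp
  | succ i ih =>
    rw [Function.iterate_succ_apply', ih, hσ', Function.iterate_succ_apply', smul_smul, pow_succ']

include hσ' in
theorem coeff_iterate_frobeniusLift (i : ℕ) (x : R[M]) :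
    ((⇑σ')^[i] x).coeff =
      (x.coeff.mapRange (σ ^ i).toAddMonoidHom (map_zero _)).mapDomain (c ^ i • ·) :=
  coeff_eq_mapDomain_mapRange (σ' ^ i) _ _ (iterate_frobeniusLift_single c σ σ' hσ' i) x

include hσ' in
theorem support_iterate_frobeniusLift_subset [DecidableEq M] (i : ℕ) (x : R[M]) :
    ((⇑σ')^[i] x).coeff.support ⊆ x.coeff.support.image (c ^ i • ·) := by
  rw [coeff_iterate_frobeniusLift c σ σ' hσ']
  exact Finsupp.mapDomain_support.trans (Finset.image_subset_image Finsupp.support_mapRange)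

include hσ' in
theorem coeff_mul_iterate_frobeniusLift (i : ℕ) (a x : R[M]) (m : M) :
    (a * (⇑σ')^[i] x).coeff m = x.coeff.sum fun τ r => a.coeff (m - c ^ i • τ) * (⇑σ)^[i] r := by
  rw [coeff_mul_apply_right, coeff_iterate_frobeniusLift c σ σ' hσ',
    Finsupp.sum_mapDomain_index (by simp) (by simp [mul_add]),
    Finsupp.sum_mapRange_index (by simp)]
  simp [sub_eq_add_neg]

include hσ' in
theorem coeff_mul_iterate_frobeniusLift_eq_sum (i : ℕ) (a x : R[M]) (J : Finset M) (u w : M)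
    (hJ : ∀ t, a.coeff (c ^ i • t - u) ≠ 0 → t ∈ J) :
    (a * (⇑σ')^[i] x).coeff (c ^ i • w - u) =
      ∑ t ∈ J, a.coeff (c ^ i • t - u) * (⇑σ)^[i] (x.coeff (w - t)) := by
  have hshift : ∀ τ, c ^ i • w - u - c ^ i • τ = c ^ i • (w - τ) - u := fun τ => by
    rw [smul_sub]; abel
  rw [coeff_mul_iterate_frobeniusLift c σ σ' hσ', Finsupp.sum]
  refine Finset.sum_bij_ne_zero (fun τ _ _ => w - τ) (fun τ _ hτ => hJ _ ?_)
    (fun _ _ _ _ _ _ h => sub_right_injective h) (fun t _ ht => ⟨w - t, ?_, ?_, sub_sub_cancel w t⟩)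
    (fun τ _ _ => by rw [hshift, sub_sub_cancel])
  · rw [hshift] at hτ
    exact left_ne_zero_of_mul hτ
  · rw [Finsupp.mem_support_iff]
    intro h0
    rw [h0, Function.iterate_fixed (map_zero σ), mul_zero] at ht
    exact ht rfl
  · rwa [hshift, sub_sub_cancel]

include hσ' in
theorem image_support_iterate_frobeniusLift_subset {E : Type*} [AddCommGroup E] [Module ℝ E]
    (L : M →+ E) (i : ℕ) (x : R[M]) :
    L '' ((⇑σ')^[i] x).coeff.support ⊆ ((c : ℝ) ^ i) • L '' x.coeff.support := by
  classical
  rintro _ ⟨w, hw, rfl⟩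
  obtain ⟨τ, hτ, rfl⟩ :=
    Finset.mem_image.mp (support_iterate_frobeniusLift_subset c σ σ' hσ' i x hw)
  refine ⟨L τ, ⟨τ, hτ, rfl⟩, ?_⟩
  rw [map_zsmul, ← Int.cast_smul_eq_zsmul ℝ, Int.cast_pow]

end FrobeniusLift

section HigherHasseWitt

variable {R M : Type*} [CommRing R] [AddCommGroup M] {p : ℕ} {σ' : R[M] →+* R[M]} {f : R[M]}
  {δ : ℕ → R[M]}
  (hδ : ∀ s : ℕ, 1 ≤ s →
    f ^ (p ^ s - 1) = ∑ i ∈ Finset.Icc 1 s, δ i * (⇑σ')^[i] (f ^ (p ^ (s - i) - 1)))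

include hδ in
theorem delta_eq_sub_sum {i : ℕ} (hi : 1 ≤ i) :
    δ i = f ^ (p ^ i - 1) - ∑ j ∈ Finset.Ico 1 i, δ j * (⇑σ')^[j] (f ^ (p ^ (i - j) - 1)) := by
  rw [hδ i hi, Finset.Icc_eq_cons_Ico hi, Finset.sum_cons, Nat.sub_self, pow_zero, Nat.sub_self,
    pow_zero, Function.iterate_fixed (map_one σ'), mul_one, add_sub_cancel_right]

include hδ in
theorem image_support_delta_subset {E : Type*} [AddCommGroup E] [Module ℝ E] (L : M →+ E)
    {σ : R →+* R} (hσ' : ∀ (u : M) (r : R), σ' (single u r) = single ((p : ℤ) • u) (σ r))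
    (hp : 1 ≤ p) (hf : f.coeff.support.Nonempty) {i : ℕ} (hi : 1 ≤ i) :
    L '' (δ i).coeff.support ⊆ ((p : ℝ) ^ i - 1) • convexHull ℝ (L '' f.coeff.support) := by
  set Δ := convexHull ℝ (L '' f.coeff.support)
  have hpow (k : ℕ) : L '' (f ^ (p ^ k - 1)).coeff.support ⊆ ((p : ℝ) ^ k - 1) • Δ := by
    simpa [Nat.cast_sub (Nat.one_le_pow k p hp)] using image_support_pow_subset L hf (p ^ k - 1)
  have hp' : (1 : ℝ) ≤ p := by exact_mod_cast hp
  induction i using Nat.strong_induction_on with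
  | _ i ih =>
  rw [delta_eq_sub_sum hδ hi, coeff_sub, coeff_sum, Set.image_subset_iff,
    ← Finsupp.mem_supported R]
  refine sub_mem ?_ (sum_mem fun j hj => ?_) <;> rw [Finsupp.mem_supported, ← Set.image_subset_iff]
  · exact hpow i
  obtain ⟨hj1, hji⟩ := Finset.mem_Ico.mp hj
  calc L '' _ ⊆ L '' (δ j).coeff.support + L '' ((⇑σ')^[j] (f ^ (p ^ (i - j) - 1))).coeff.support :=
        image_support_mul_subset L _ _
    _ ⊆ ((p : ℝ) ^ j - 1) • Δ + (p : ℝ) ^ j • (((p : ℝ) ^ (i - j) - 1) • Δ) := by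
        refine Set.add_subset_add (ih j hji hj1) ?_
        have := image_support_iterate_frobeniusLift_subset (p : ℤ) σ σ' hσ' L j
          (f ^ (p ^ (i - j) - 1))
        rw [Int.cast_natCast] at this
        exact this.trans (Set.smul_set_mono (hpow _))
    _ = ((p : ℝ) ^ i - 1) • Δ := by
        rw [smul_smul, ← (convex_convexHull ℝ _).add_smul (by linarith [one_le_pow₀ (n := j) hp'])
          (mul_nonneg (by positivity) (by linarith [one_le_pow₀ (n := i - j) hp']))]
        congr 1
        rw [mul_sub, ← pow_add, Nat.add_sub_cancel' hji.le]
        ring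

end HigherHasseWitt

end AddMonoidAlgebra

theorem higher_hasse_witt_recursion_general {R : Type*} [CommRing R] {n : ℕ} (p : ℕ) (hp : p.Prime)
    (σ : R →+* R)
    (σ' : AddMonoidAlgebra R (Fin n → ℤ) →+* AddMonoidAlgebra R (Fin n → ℤ))
    (hσ' : ∀ (u : Fin n → ℤ) (r : R),
      σ' (AddMonoidAlgebra.single u r) = AddMonoidAlgebra.single ((p : ℤ) • u) (σ r))
    (f : AddMonoidAlgebra R (Fin n → ℤ))
    (δ : ℕ → AddMonoidAlgebra R (Fin n → ℤ))
    (hδ : ∀ s : ℕ, 1 ≤ s →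
      f ^ (p ^ s - 1) = ∑ i ∈ Finset.Icc 1 s, δ i * (⇑σ')^[i] (f ^ (p ^ (s - i) - 1)))
    -- `J` is the set of interior lattice points of the Newton polytope of `f`
    (J : Finset (Fin n → ℤ))
    (hJ : ∀ u : Fin n → ℤ, u ∈ J ↔ (fun i => (u i : ℝ)) ∈
      interior (convexHull ℝ ((fun (w : Fin n → ℤ) (i : Fin n) => (w i : ℝ)) '' f.coeff.support)))
    -- the matrices α and γ
    (α γ : ℕ → Matrix J J R)
    (hα : ∀ (s : ℕ) (u v : J), α s u v = (f ^ (p ^ s - 1)).coeff ((p : ℤ) ^ s • (v : Fin n → ℤ) - u))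
    (hγ : ∀ (s : ℕ) (u v : J), γ s u v = (δ s).coeff ((p : ℤ) ^ s • (v : Fin n → ℤ) - u))
    (s : ℕ) (hs : 1 ≤ s) :
    α s = ∑ i ∈ Finset.Icc 1 s, γ i * (α (s - i)).map (⇑σ)^[i] := by
  set L := (Int.castAddHom ℝ).compLeft (Fin n)
  set Δ := convexHull ℝ (L '' f.coeff.support)
  replace hJ : ∀ u, u ∈ J ↔ L u ∈ interior Δ := hJ
  ext u v
  have hf : f.coeff.support.Nonempty := by
    simpa using convexHull_nonempty_iff.mp ⟨_, interior_subset ((hJ u).mp u.2)⟩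
  have hJ_of_delta {i : ℕ} (hi : 1 ≤ i) (t : Fin n → ℤ)
      (ht : (δ i).coeff ((p : ℤ) ^ i • t - u) ≠ 0) : t ∈ J := by
    have hpi : (1 : ℝ) ≤ (p : ℝ) ^ i := one_le_pow₀ (by exact_mod_cast hp.one_le)
    have := (convex_convexHull ℝ _).inv_smul_add_mem_interior hpi ((hJ u).mp u.2)
      (image_support_delta_subset hδ L hσ' hp.one_le hf hi ⟨_, Finsupp.mem_support_iff.mpr ht, rfl⟩)
    rwa [map_sub, sub_add_cancel, map_zsmul, ← Int.cast_smul_eq_zsmul ℝ, Int.cast_pow,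
      Int.cast_natCast, inv_smul_smul₀ (by positivity), ← hJ] at this
  rw [hα, hδ s hs, coeff_sum, Finsupp.finsetSum_apply, Matrix.sum_apply]
  refine Finset.sum_congr rfl fun i hi => ?_
  obtain ⟨hi1, his⟩ := Finset.mem_Icc.mp hi
  rw [Matrix.mul_apply, ← Nat.add_sub_cancel' his, pow_add, mul_smul, Nat.add_sub_cancel_left,
    coeff_mul_iterate_frobeniusLift_eq_sum (p : ℤ) σ σ' hσ' i _ _ J _ _ (hJ_of_delta hi1),
    ← Finset.sum_coe_sort J]
  simp only [Matrix.map_apply, hγ, hα]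

/-- Lemma 3(ii) of the paper:
`α_s = γ_1·σ(α_{s-1}) + γ_2·σ²(α_{s-2}) + ⋯ + γ_s` for `s ≥ 1`. -/
theorem higher_hasse_witt_recursion {R : Type*} [CommRing R] {n : ℕ} (p : ℕ) (hp : p.Prime)
    (σ : R →+* R) (hσ : ∀ r : R, σ r - r ^ p ∈ Ideal.span {(p : R)})
    (σ' : AddMonoidAlgebra R (Fin n → ℤ) →+* AddMonoidAlgebra R (Fin n → ℤ))
    (hσ' : ∀ (u : Fin n → ℤ) (r : R),
      σ' (AddMonoidAlgebra.single u r) = AddMonoidAlgebra.single ((p : ℤ) • u) (σ r))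
    (f : AddMonoidAlgebra R (Fin n → ℤ))
    (δ : ℕ → AddMonoidAlgebra R (Fin n → ℤ))
    (hδ : ∀ s : ℕ, 1 ≤ s →
      f ^ (p ^ s - 1) = ∑ i ∈ Finset.Icc 1 s, δ i * (⇑σ')^[i] (f ^ (p ^ (s - i) - 1)))
    -- `J` is the set of interior lattice points of the Newton polytope of `f`
    (J : Finset (Fin n → ℤ)) (hJne : J.Nonempty)
    (hJ : ∀ u : Fin n → ℤ, u ∈ J ↔ (fun i => (u i : ℝ)) ∈
      interior (convexHull ℝ ((fun (w : Fin n → ℤ) (i : Fin n) => (w i : ℝ)) '' f.coeff.support)))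
    -- the matrices α and γ
    (α γ : ℕ → Matrix J J R)
    (hα : ∀ (s : ℕ) (u v : J), α s u v = (f ^ (p ^ s - 1)).coeff ((p : ℤ) ^ s • (v : Fin n → ℤ) - u))
    (hγ : ∀ (s : ℕ) (u v : J), γ s u v = (δ s).coeff ((p : ℤ) ^ s • (v : Fin n → ℤ) - u))
    (s : ℕ) (hs : 1 ≤ s) :
    α s = ∑ i ∈ Finset.Icc 1 s, γ i * (α (s - i)).map (⇑σ)^[i] :=
  higher_hasse_witt_recursion_general p hp σ σ' hσ' f δ hδ J hJ α γ hα hγ s hs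
end

section
/- With J = Δ(f)° ∩ ℤⁿ, β_m the g×g matrix with (β_m)_{u,v} = coefficient of x^(m·v − u) in f^(m−1), and γ_i defined from δ_i(f) as in the paper, one has β_{m·p^s} − Σ_{i=1}^{s} γ_i·σ^i(β_{m·p^{s−i}}) ∈ p^s·Mat_{g×g}(R) for all m, s ≥ 1. -/
/-!
Put `g = f ^ (m - 1)`, so that `f ^ (m p^s - 1) = f ^ (p^s - 1) g ^ (p^s)`, and expand
`f ^ (p^s - 1)` by the recursion defining `δ`:
`f ^ (m p^s - 1) - ∑ δ_i σ^i(f ^ (m p^(s-i) - 1))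
  = ∑ δ_i σ^i(f ^ (p^(s-i) - 1)) (g ^ (p^s) - σ^i(g ^ (p^(s-i))))`.
Since `σ` lifts Frobenius, `p^(s-i+1)` divides the last factor, and `p^(i-1)` divides `δ_i` by
strong induction, because `δ_(s+1)` is the left-hand side for `m = p`. Hence the left-hand side
is divisible by `p^s` in `R[ℤⁿ]`.

The matrix congruence is its coefficient at `m p^s v - u`. The summation over `J` in the matrix
product loses nothing: the exponents of `δ_i` lie in `(p^i - 1) Δ`, so if `δ_i` has a nonzero
coefficient at `p^i w - u` with `u` interior to `Δ`, then `w = p^(-i) u + (1 - p^(-i)) d` with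
`d ∈ Δ` is interior to `Δ` as well.
-/

open AddMonoidAlgebra Finset Pointwise

theorem Convex.mem_interior_of_smul_eq_add {𝕜 V : Type*} [Field 𝕜] [LinearOrder 𝕜]
    [IsStrictOrderedRing 𝕜] [AddCommGroup V] [Module 𝕜 V] [TopologicalSpace V]
    [IsTopologicalAddGroup V] [ContinuousConstSMul 𝕜 V] {Δ : Set V} (hΔ : Convex 𝕜 Δ)
    {t : 𝕜} (ht : 1 ≤ t) {x y z : V} (hx : x ∈ interior Δ) (hy : y ∈ (t - 1) • Δ)
    (hz : t • z = x + y) : z ∈ interior Δ := by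
  obtain ⟨d, hd, rfl⟩ := hy
  have ht0 : 0 < t := zero_lt_one.trans_le ht
  have hcombo : z = t⁻¹ • x + (1 - t⁻¹) • d := by
    rw [← inv_smul_smul₀ ht0.ne' z, hz, smul_add, smul_smul, inv_mul_eq_div, sub_div,
      div_self ht0.ne', one_div]
  rw [hcombo]
  exact hΔ.combo_interior_self_mem_interior hx hd (inv_pos.2 ht0)
    (sub_nonneg.2 (inv_le_one_of_one_le₀ ht)) (add_sub_cancel _ _)

section FrobeniusLift

variable {A : Type*} [CommRing A] {p : ℕ} {φ : A →+* A}

def IsFrobeniusLift (p : ℕ) (φ : A →+* A) : Prop :=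
  ∀ x, (p : A) ∣ φ x - x ^ p

theorem natCast_dvd_map_add_sub_add_pow (hp : p.Prime) {x y : A}
    (hx : (p : A) ∣ φ x - x ^ p) (hy : (p : A) ∣ φ y - y ^ p) :
    (p : A) ∣ φ (x + y) - (x + y) ^ p := by
  obtain ⟨c, hc⟩ := exists_add_pow_prime_eq hp x y
  have hsplit : φ (x + y) - (x + y) ^ p =
      (φ x - x ^ p) + (φ y - y ^ p) - p * (x * y * c) := by
    rw [map_add, hc]; ring
  rw [hsplit]
  exact (hx.add hy).sub (dvd_mul_right _ _)

theorem pow_mul_sub_one (x : A) {m : ℕ} (hm : 1 ≤ m) (t : ℕ) :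
    x ^ (m * t - 1) = x ^ (t - 1) * (x ^ (m - 1)) ^ t := by
  obtain ⟨m, rfl⟩ := Nat.exists_eq_add_of_le' hm
  rw [← pow_mul, ← pow_add]
  congr 1
  rcases t with _ | t
  · simp
  · simp only [Nat.add_sub_cancel, add_mul, one_mul]; omega

variable {f : A} {δ : ℕ → A}

theorem delta_eq_sub_sum_Ico
    (hδ : ∀ s, 1 ≤ s →
      f ^ (p ^ s - 1) = ∑ i ∈ Icc 1 s, δ i * (φ ^ i) (f ^ (p ^ (s - i) - 1)))
    {s : ℕ} (hs : 1 ≤ s) :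
    δ s = f ^ (p ^ s - 1) - ∑ i ∈ Ico 1 s, δ i * (φ ^ i) (f ^ (p ^ (s - i) - 1)) := by
  rw [hδ s hs, ← Finset.Ico_insert_right hs, Finset.sum_insert (by simp)]
  simp

namespace IsFrobeniusLift

variable (hφ : IsFrobeniusLift p φ)
include hφ

theorem natCast_dvd_pow_apply_sub_pow (i : ℕ) (x : A) : (p : A) ∣ (φ ^ i) x - x ^ p ^ i := by
  induction i with
  | zero => simp
  | succ i ih =>
    have hsplit : (φ ^ (i + 1)) x - x ^ p ^ (i + 1) =
        (φ ((φ ^ i) x) - ((φ ^ i) x) ^ p) + (((φ ^ i) x) ^ p - (x ^ p ^ i) ^ p) := by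
      rw [pow_succ', RingHom.mul_def, RingHom.comp_apply, ← pow_mul, ← pow_succ]; ring
    rw [hsplit]
    exact (hφ _).add (ih.trans (sub_dvd_pow_sub_pow _ _ p))

theorem natCast_pow_dvd_pow_apply_pow_sub (i k : ℕ) (x : A) :
    (p : A) ^ (k + 1) ∣ (φ ^ i) (x ^ p ^ k) - x ^ p ^ (i + k) := by
  rw [map_pow, pow_add p, pow_mul x]
  exact dvd_sub_pow_of_dvd_sub (hφ.natCast_dvd_pow_apply_sub_pow i x) k

variable (hδ : ∀ s, 1 ≤ s →
  f ^ (p ^ s - 1) = ∑ i ∈ Icc 1 s, δ i * (φ ^ i) (f ^ (p ^ (s - i) - 1)))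
include hδ

theorem dvd_sub_sum_of_dvd_delta {s m : ℕ} (hm : 1 ≤ m)
    (hδs : ∀ i ∈ Icc 1 s, (p : A) ^ (i - 1) ∣ δ i) :
    (p : A) ^ s ∣
      f ^ (m * p ^ s - 1) - ∑ i ∈ Icc 1 s, δ i * (φ ^ i) (f ^ (m * p ^ (s - i) - 1)) := by
  rcases Nat.eq_zero_or_pos s with rfl | hs
  · simp
  have hexpand :
      f ^ (m * p ^ s - 1) - ∑ i ∈ Icc 1 s, δ i * (φ ^ i) (f ^ (m * p ^ (s - i) - 1)) =
      ∑ i ∈ Icc 1 s, δ i * ((φ ^ i) (f ^ (p ^ (s - i) - 1)) *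
        ((f ^ (m - 1)) ^ p ^ s - (φ ^ i) ((f ^ (m - 1)) ^ p ^ (s - i)))) := by
    rw [pow_mul_sub_one f hm, hδ s hs, Finset.sum_mul, ← Finset.sum_sub_distrib]
    refine Finset.sum_congr rfl fun i _ => ?_
    rw [pow_mul_sub_one f hm, map_mul]
    ring
  rw [hexpand]
  refine Finset.dvd_sum fun i hi => ?_
  obtain ⟨hi1, his⟩ := Finset.mem_Icc.mp hi
  have hfrob := hφ.natCast_pow_dvd_pow_apply_pow_sub i (s - i) (f ^ (m - 1))
  rw [Nat.add_sub_cancel' his] at hfrob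
  have hsplit : (p : A) ^ s = (p : A) ^ (i - 1) * (p : A) ^ (s - i + 1) := by
    rw [← pow_add]; congr 1; omega
  rw [hsplit]
  exact mul_dvd_mul (hδs i hi) ((dvd_sub_comm.mp hfrob).mul_left _)

theorem natCast_pow_dvd_delta (hp : 1 ≤ p) (s : ℕ) : (p : A) ^ (s - 1) ∣ δ s := by
  induction s using Nat.strong_induction_on with
  | _ s ih =>
  rcases s with _ | s
  · simp
  rcases Nat.eq_zero_or_pos s with rfl | hs
  · simp
  have hδsucc : δ (s + 1) =
      f ^ (p * p ^ s - 1) - ∑ i ∈ Icc 1 s, δ i * (φ ^ i) (f ^ (p * p ^ (s - i) - 1)) := by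
    rw [delta_eq_sub_sum_Ico hδ (by omega), ← pow_succ']
    congr 1
    refine Finset.sum_congr (Finset.Ico_add_one_right_eq_Icc 1 s) fun i hi => ?_
    rw [← pow_succ', Nat.sub_add_comm (Finset.mem_Icc.mp hi).2]
  rw [hδsucc, Nat.add_sub_cancel]
  exact hφ.dvd_sub_sum_of_dvd_delta hδ hp fun i hi => ih i (by simp at hi; omega)

theorem natCast_pow_dvd_sub_sum (hp : 1 ≤ p) {s m : ℕ} (hm : 1 ≤ m) :
    (p : A) ^ s ∣
      f ^ (m * p ^ s - 1) - ∑ i ∈ Icc 1 s, δ i * (φ ^ i) (f ^ (m * p ^ (s - i) - 1)) :=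
  hφ.dvd_sub_sum_of_dvd_delta hδ hm fun i _ => hφ.natCast_pow_dvd_delta hδ hp i

end IsFrobeniusLift

end FrobeniusLift

namespace AddMonoidAlgebra

variable {R M : Type*} [CommRing R] [AddCommGroup M]

theorem coeff_mem_span_of_algebraMap_dvd {r : R} {h : R[M]} (hrh : algebraMap R R[M] r ∣ h)
    (c : M) : h.coeff c ∈ Ideal.span {r} := by
  obtain ⟨E, rfl⟩ := hrh
  rw [Ideal.mem_span_singleton]
  exact ⟨E.coeff c, by simp⟩

variable {p : ℕ} {σ : R →+* R} {σ' : R[M] →+* R[M]}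

theorem isFrobeniusLift_of_map_single (hp : p.Prime) (hσ : IsFrobeniusLift p σ)
    (hσ' : ∀ u r, σ' (single u r) = single ((p : ℤ) • u) (σ r)) :
    IsFrobeniusLift p σ' := by
  intro h
  induction h using AddMonoidAlgebra.induction_linear with
  | zero => simp [hp.ne_zero]
  | add x y hx hy => exact natCast_dvd_map_add_sub_add_pow hp hx hy
  | single u r =>
    obtain ⟨c, hc⟩ := hσ r
    refine ⟨single ((p : ℤ) • u) c, ?_⟩
    rw [hσ', single_pow, natCast_def, single_mul_single, zero_add, natCast_zsmul, ← single_sub,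
      hc]

theorem pow_apply_single (hσ' : ∀ u r, σ' (single u r) = single ((p : ℤ) • u) (σ r))
    (i : ℕ) (u : M) (r : R) :
    (σ' ^ i) (single u r) = single ((p : ℤ) ^ i • u) ((σ ^ i) r) := by
  induction i generalizing u r with
  | zero => simp
  | succ i ih =>
    rw [pow_succ, RingHom.mul_def, RingHom.comp_apply, hσ', ih, smul_smul, ← pow_succ]; rfl

section MapSingle

variable {k : ℤ} {ρ : R →+ R} {τ : R[M] →+ R[M]}
  (hτ : ∀ u r, τ (single u r) = single (k • u) (ρ r))
include hτ

theorem coeff_mul_map_eq_sum (a h : R[M]) {J : Finset M} {u : M}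
    (hJ : ∀ w, a.coeff (k • w - u) ≠ 0 → w ∈ J) (x : M) :
    (a * τ h).coeff (k • x - u) = ∑ w ∈ J, a.coeff (k • w - u) * ρ (h.coeff (x - w)) := by
  classical
  induction h using AddMonoidAlgebra.induction_linear with
  | zero => simp
  | add h₁ h₂ ih₁ ih₂ =>
    simp only [map_add, mul_add, coeff_add, Finsupp.add_apply, ih₁, ih₂,
      ← Finset.sum_add_distrib]
  | single y r =>
    rw [hτ, coeff_mul_single_apply, show k • x - u + -(k • y) = k • (x - y) - u by
      rw [smul_sub]; abel, Finset.sum_eq_single (x - y)]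
    · simp
    · intro w _ hw
      rw [coeff_single, Finsupp.single_eq_of_ne fun h => hw (by rw [← h, sub_sub_cancel]),
        map_zero, mul_zero]
    · intro hxy
      rw [not_ne_iff.mp (mt (hJ _) hxy), zero_mul]

theorem map_mem_supported {V : Type*} [AddCommGroup V] [Module ℝ V] (ι : M →+ V) {S : Set V}
    {h : R[M]} (hh : h ∈ supported R R (ι ⁻¹' S)) :
    τ h ∈ supported R R (ι ⁻¹' ((k : ℝ) • S)) := by
  rw [← sum_coeff_single h, Finsupp.sum, map_sum]
  refine Submodule.sum_mem _ fun y hy => ?_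
  rw [hτ, mem_supported, coeff_single]
  intro z hz
  obtain rfl := Finset.mem_singleton.1 (Finsupp.support_single_subset hz)
  rw [Set.mem_preimage, map_zsmul, ← Int.cast_smul_eq_zsmul ℝ]
  exact Set.smul_mem_smul_set (mem_supported.1 hh hy)

end MapSingle

theorem mul_map_apply_eq_coeff_mul
    (hσ' : ∀ u r, σ' (single u r) = single ((p : ℤ) • u) (σ r)) {J : Finset M} {a h : R[M]}
    {A B : Matrix J J R} {i : ℕ} {k : ℤ}
    (hA : ∀ u w : J, A u w = a.coeff ((p : ℤ) ^ i • (w : M) - u))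
    (hB : ∀ w v : J, B w v = h.coeff (k • (v : M) - w)) {u : J}
    (hJ : ∀ w, a.coeff ((p : ℤ) ^ i • w - u) ≠ 0 → w ∈ J) (v : J) :
    (A * B.map (⇑σ)^[i]) u v =
      (a * (σ' ^ i) h).coeff ((p : ℤ) ^ i • k • (v : M) - u) := by
  refine Eq.trans ?_ (coeff_mul_map_eq_sum (τ := (σ' ^ i).toAddMonoidHom)
    (ρ := (σ ^ i).toAddMonoidHom) (pow_apply_single hσ' i) a h hJ _).symm
  rw [Matrix.mul_apply, ← Finset.sum_coe_sort J]
  simp [hA, hB]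

theorem mul_mem_supported_add {s t : Set M} {x y : R[M]} (hx : x ∈ supported R R s)
    (hy : y ∈ supported R R t) : x * y ∈ supported R R (s + t) := by
  classical
  rw [mem_supported] at hx hy ⊢
  refine (Finset.coe_subset.2 (support_coeff_mul_subset x y)).trans ?_
  rw [Finset.coe_add]
  exact Set.add_subset_add hx hy

variable {V : Type*} [AddCommGroup V] [Module ℝ V] (ι : M →+ V) {Δ : Set V}
  (hΔ : Convex ℝ Δ)
include hΔ

theorem mul_mem_supported_smul {s t : ℝ} (hs : 0 ≤ s) (ht : 0 ≤ t) {x y : R[M]}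
    (hx : x ∈ supported R R (ι ⁻¹' (s • Δ)))
    (hy : y ∈ supported R R (ι ⁻¹' (t • Δ))) :
    x * y ∈ supported R R (ι ⁻¹' ((s + t) • Δ)) := by
  rw [hΔ.add_smul hs ht]
  exact supported_mono (Set.preimage_add_preimage_subset ι) (mul_mem_supported_add hx hy)

theorem pow_mem_supported_smul (hne : Δ.Nonempty) {f : R[M]}
    (hf : f ∈ supported R R (ι ⁻¹' Δ)) (N : ℕ) :
    f ^ N ∈ supported R R (ι ⁻¹' ((N : ℝ) • Δ)) := by
  induction N with
  | zero =>
    rw [pow_zero, Nat.cast_zero, Set.zero_smul_set hne, mem_supported]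
    refine (Finset.coe_subset.2 support_coeff_one_subset).trans ?_
    simp
  | succ N ih =>
    rw [pow_succ, Nat.cast_succ]
    exact mul_mem_supported_smul ι hΔ N.cast_nonneg zero_le_one ih (by rwa [one_smul])

variable (hp : 1 ≤ p) (hσ' : ∀ u r, σ' (single u r) = single ((p : ℤ) • u) (σ r))
  {f : R[M]} {δ : ℕ → R[M]}
  (hδ : ∀ s, 1 ≤ s →
    f ^ (p ^ s - 1) = ∑ i ∈ Icc 1 s, δ i * (σ' ^ i) (f ^ (p ^ (s - i) - 1)))
  (hf : f ∈ supported R R (ι ⁻¹' Δ))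
include hp hσ' hδ hf

theorem delta_mem_supported (hne : Δ.Nonempty) {s : ℕ} (hs : 1 ≤ s) :
    δ s ∈ supported R R (ι ⁻¹' (((p : ℝ) ^ s - 1) • Δ)) := by
  induction s using Nat.strong_induction_on with
  | _ s ih =>
  have hpow (N : ℕ) :
      f ^ (p ^ N - 1) ∈ supported R R (ι ⁻¹' (((p : ℝ) ^ N - 1) • Δ)) := by
    have := pow_mem_supported_smul ι hΔ hne hf (p ^ N - 1)
    rwa [Nat.cast_sub (Nat.one_le_pow _ _ hp), Nat.cast_pow, Nat.cast_one] at this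
  have hp1 (N : ℕ) : 0 ≤ (p : ℝ) ^ N - 1 :=
    sub_nonneg.2 (one_le_pow₀ (by exact_mod_cast hp))
  rw [delta_eq_sub_sum_Ico hδ hs]
  refine Submodule.sub_mem _ (hpow s) (Submodule.sum_mem _ fun i hi => ?_)
  obtain ⟨hi1, his⟩ := Finset.mem_Ico.1 hi
  have hfrob := map_mem_supported (τ := (σ' ^ i).toAddMonoidHom) (ρ := (σ ^ i).toAddMonoidHom)
    (pow_apply_single hσ' i) ι (hpow (s - i))
  rw [smul_smul] at hfrob
  have hscalar : (p : ℝ) ^ s - 1 =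
      ((p : ℝ) ^ i - 1) + (((p : ℤ) ^ i : ℤ) : ℝ) * ((p : ℝ) ^ (s - i) - 1) := by
    push_cast
    rw [mul_sub, ← pow_add, Nat.add_sub_cancel' his.le]
    ring
  rw [hscalar]
  exact mul_mem_supported_smul ι hΔ (hp1 i) (mul_nonneg (by positivity) (hp1 _)) (ih i his hi1)
    hfrob

theorem mem_interior_of_coeff_delta_ne_zero [TopologicalSpace V] [IsTopologicalAddGroup V]
    [ContinuousConstSMul ℝ V] {i : ℕ} (hi : 1 ≤ i) {u w : M} (hu : ι u ∈ interior Δ)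
    (hw : (δ i).coeff ((p : ℤ) ^ i • w - u) ≠ 0) : ι w ∈ interior Δ := by
  have hδi := delta_mem_supported ι hΔ hp hσ' hδ hf ⟨_, interior_subset hu⟩ hi
    (Finsupp.mem_support_iff.2 hw)
  refine hΔ.mem_interior_of_smul_eq_add (one_le_pow₀ (by exact_mod_cast hp)) hu hδi ?_
  rw [map_sub, map_zsmul, ← Int.cast_smul_eq_zsmul ℝ, add_sub_cancel]
  push_cast; rfl

end AddMonoidAlgebra

theorem beta_gamma_congruence_general {R : Type*} [CommRing R] {n : ℕ} (p : ℕ) (hp : p.Prime)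
    (σ : R →+* R) (hσ : ∀ r : R, σ r - r ^ p ∈ Ideal.span {(p : R)})
    (σ' : AddMonoidAlgebra R (Fin n → ℤ) →+* AddMonoidAlgebra R (Fin n → ℤ))
    (hσ' : ∀ (u : Fin n → ℤ) (r : R),
      σ' (AddMonoidAlgebra.single u r) = AddMonoidAlgebra.single ((p : ℤ) • u) (σ r))
    (f : AddMonoidAlgebra R (Fin n → ℤ))
    (δ : ℕ → AddMonoidAlgebra R (Fin n → ℤ))
    (hδ : ∀ s : ℕ, 1 ≤ s →
      f ^ (p ^ s - 1) = ∑ i ∈ Finset.Icc 1 s, δ i * (⇑σ')^[i] (f ^ (p ^ (s - i) - 1)))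
    -- `J` is the set of interior lattice points of the Newton polytope of `f`
    (J : Finset (Fin n → ℤ))
    (hJ : ∀ u : Fin n → ℤ, u ∈ J ↔ (fun i => (u i : ℝ)) ∈
      interior (convexHull ℝ ((fun (w : Fin n → ℤ) (i : Fin n) => (w i : ℝ)) '' f.coeff.support)))
    -- the matrices β and γ
    (β : ℕ → Matrix J J R) (γ : ℕ → Matrix J J R)
    (hβ : ∀ (m : ℕ) (u v : J), β m u v = (f ^ (m - 1)).coeff ((m : ℤ) • (v : Fin n → ℤ) - u))
    (hγ : ∀ (i : ℕ) (u v : J), γ i u v = (δ i).coeff ((p : ℤ) ^ i • (v : Fin n → ℤ) - u))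
    (m s : ℕ) (hm : 1 ≤ m) (u v : J) :
    (β (m * p ^ s) - ∑ i ∈ Finset.Icc 1 s, γ i * (β (m * p ^ (s - i))).map (⇑σ)^[i]) u v ∈
      Ideal.span {(p : R) ^ s} := by
  set ι : (Fin n → ℤ) →+ (Fin n → ℝ) := (Int.castAddHom ℝ).compLeft (Fin n)
  have hJ' : ∀ w, w ∈ J ↔ ι w ∈ interior (convexHull ℝ (ι '' f.coeff.support)) := hJ
  have hf : f ∈ supported R R (ι ⁻¹' convexHull ℝ (ι '' f.coeff.support)) :=
    fun a ha => subset_convexHull ℝ _ ⟨a, ha, rfl⟩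
  have hδJ (i : ℕ) (hi : i ∈ Icc 1 s) (w : Fin n → ℤ)
      (hw : (δ i).coeff ((p : ℤ) ^ i • w - u) ≠ 0) : w ∈ J :=
    (hJ' w).2 <| mem_interior_of_coeff_delta_ne_zero ι (convex_convexHull ℝ _) hp.one_le hσ' hδ
      hf (mem_Icc.1 hi).1 ((hJ' u).1 u.2) hw
  have hentry : ∀ i ∈ Icc 1 s, (γ i * (β (m * p ^ (s - i))).map (⇑σ)^[i]) u v =
      (δ i * (σ' ^ i) (f ^ (m * p ^ (s - i) - 1))).coeff
        (((m * p ^ s : ℕ) : ℤ) • (v : Fin n → ℤ) - u) := by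
    intro i hi
    rw [mul_map_apply_eq_coeff_mul hσ' (hγ i) (hβ _) (hδJ i hi), smul_smul]
    congr 3
    push_cast
    rw [mul_left_comm, ← pow_add, Nat.add_sub_cancel' (mem_Icc.1 hi).2]
  rw [Matrix.sub_apply, Matrix.sum_apply, Finset.sum_congr rfl hentry, hβ,
    ← Finsupp.finsetSum_apply, ← coeff_sum, ← Finsupp.sub_apply, ← coeff_sub]
  refine coeff_mem_span_of_algebraMap_dvd ?_ _
  rw [map_pow, map_natCast]
  have hσF : IsFrobeniusLift p σ := fun r => Ideal.mem_span_singleton.1 (hσ r)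
  exact (isFrobeniusLift_of_map_single hp hσF hσ').natCast_pow_dvd_sub_sum hδ hp.one_le hm

/-- Lemma 3(iii) of the paper:
`β_{m p^s} − Σ_{i=1}^s γ_i · σ^i(β_{m p^{s-i}}) ∈ p^s Mat_{g×g}(R)`. -/
theorem beta_gamma_congruence {R : Type*} [CommRing R] {n : ℕ} (p : ℕ) (hp : p.Prime)
    (hchar : ∀ (N : ℕ) (r : R), N ≠ 0 → (N : ℕ) • r = 0 → r = 0)
    (σ : R →+* R) (hσ : ∀ r : R, σ r - r ^ p ∈ Ideal.span {(p : R)})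
    (σ' : AddMonoidAlgebra R (Fin n → ℤ) →+* AddMonoidAlgebra R (Fin n → ℤ))
    (hσ' : ∀ (u : Fin n → ℤ) (r : R),
      σ' (AddMonoidAlgebra.single u r) = AddMonoidAlgebra.single ((p : ℤ) • u) (σ r))
    (f : AddMonoidAlgebra R (Fin n → ℤ))
    (δ : ℕ → AddMonoidAlgebra R (Fin n → ℤ))
    (hδ : ∀ s : ℕ, 1 ≤ s →
      f ^ (p ^ s - 1) = ∑ i ∈ Finset.Icc 1 s, δ i * (⇑σ')^[i] (f ^ (p ^ (s - i) - 1)))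
    -- `J` is the set of interior lattice points of the Newton polytope of `f`
    (J : Finset (Fin n → ℤ)) (hJne : J.Nonempty)
    (hJ : ∀ u : Fin n → ℤ, u ∈ J ↔ (fun i => (u i : ℝ)) ∈
      interior (convexHull ℝ ((fun (w : Fin n → ℤ) (i : Fin n) => (w i : ℝ)) '' f.coeff.support)))
    -- the matrices β and γ
    (β : ℕ → Matrix J J R) (γ : ℕ → Matrix J J R)
    (hβ : ∀ (m : ℕ) (u v : J), β m u v = (f ^ (m - 1)).coeff ((m : ℤ) • (v : Fin n → ℤ) - u))
    (hγ : ∀ (i : ℕ) (u v : J), γ i u v = (δ i).coeff ((p : ℤ) ^ i • (v : Fin n → ℤ) - u))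
    (m s : ℕ) (hm : 1 ≤ m) (hs : 1 ≤ s) (u v : J) :
    (β (m * p ^ s) - ∑ i ∈ Finset.Icc 1 s, γ i * (β (m * p ^ (s - i))).map (⇑σ)^[i]) u v ∈
      Ideal.span {(p : R) ^ s} :=
  beta_gamma_congruence_general p hp σ hσ σ' hσ' f δ hδ J hJ β γ hβ hγ m s hm u v
end

section
/- Let f be a Laurent polynomial over a characteristic-zero commutative ring R, p a prime, σ a Frobenius endomorphism of R, J = Δ(f)° ∩ ℤⁿ, and α_s the g×g matrix of coefficients of x^(p^s·v−u) in f^(p^s−1). Then for every s ≥ 1, α_s ≡ α_1 · σ(α_1) · σ²(α_1) ⋯ σ^{s−1}(α_1) mod p. -/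
/-!
Reduce modulo `p`. Over `R ⧸ (p)` the lift `σ` of Frobenius becomes `x ↦ x ^ p`, so it suffices
to show `α_{s+1} = α_1 · Frob(α_s)` there. Since `p ^ (s+1) - 1 = (p - 1) + p (p ^ s - 1)`, we
have `f ^ (p ^ (s+1) - 1) = f ^ (p - 1) · (f ^ (p ^ s - 1)) ^ p`, and in characteristic `p` the
second factor is `∑ c_m ^ p x ^ (p m)`. The coefficient of `x ^ (p ^ (s+1) v - u)` is therefore
`∑_w (f ^ (p - 1))_{p w - u} · (α_s)_{w v} ^ p`. A nonzero first factor puts `p w - u` in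
`(p - 1) Δ`, so `w = (u + (p w - u)) / p` is a convex combination of the interior point `u` and a
point of `Δ`, hence interior: only `w ∈ J` contribute.
-/

theorem Nat.pow_succ_sub_one_eq {p : ℕ} (hp : p ≠ 0) (s : ℕ) :
    p ^ (s + 1) - 1 = (p - 1) + (p ^ s - 1) * p := by
  have : p ≤ p ^ s * p := Nat.le_mul_of_pos_left p (pow_pos (Nat.pos_of_ne_zero hp) s)
  rw [pow_succ, Nat.sub_mul, one_mul]
  omega

theorem Matrix.map_list_prod {m R S : Type*} [Fintype m] [DecidableEq m] [Semiring R] [Semiring S]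
    (π : R →+* S) (l : List (Matrix m m R)) : l.prod.map π = (l.map (·.map π)).prod :=
  _root_.map_list_prod π.mapMatrix l

theorem Matrix.eq_prod_map_iterate {m S : Type*} [Fintype m] [DecidableEq m] [Semiring S]
    (φ : S →+* S) (β : ℕ → Matrix m m S) (h0 : β 0 = 1)
    (hsucc : ∀ s, β (s + 1) = β 1 * (β s).map φ) (s : ℕ) :
    β s = ((List.range s).map fun i => (β 1).map φ^[i]).prod := by
  induction s with
  | zero => simpa using h0
  | succ s ih =>
    rw [hsucc, ih, Matrix.map_list_prod, List.range_succ_eq_map, List.map_cons, List.prod_cons,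
      Function.iterate_zero, Matrix.map_id, List.map_map, List.map_map]
    refine congrArg (β 1 * List.prod ·) (List.map_congr_left fun i _ => ?_)
    rw [Function.comp_apply, Matrix.map_map, ← Function.iterate_succ', Function.iterate_succ]
    rfl

theorem Matrix.map_prod_map_iterate {m R S : Type*} [Fintype m] [DecidableEq m] [Semiring R]
    [Semiring S] {π : R →+* S} {σ : R →+* R} {φ : S →+* S} (h : Function.Semiconj π σ φ)
    (A : Matrix m m R) (s : ℕ) :
    (((List.range s).map fun i => A.map σ^[i]).prod).map π =
      ((List.range s).map fun i => (A.map π).map φ^[i]).prod := by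
  rw [Matrix.map_list_prod, List.map_map]
  refine congrArg _ (List.map_congr_left fun i _ => ?_)
  simp [Matrix.map_map, (h.iterate_right i).comp_eq]

namespace AddMonoidAlgebra

variable {S M : Type*} [CommSemiring S]

theorem support_coeff_mapRingHom_subset {R : Type*} [Semiring R] [AddMonoid M] (π : R →+* S)
    (g : AddMonoidAlgebra R M) : (mapRingHom M π g).coeff.support ⊆ g.coeff.support :=
  fun m hm => Finsupp.mem_support_iff.2 fun h0 =>
    Finsupp.mem_support_iff.1 hm (by rw [coeff_mapRingHom, h0, map_zero])

theorem pow_char_eq_sum_single [AddCommMonoid M] (p : ℕ) [ExpChar S p]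
    (g : AddMonoidAlgebra S M) :
    g ^ p = ∑ m ∈ g.coeff.support, single (p • m) (g.coeff m ^ p) := by
  have : ExpChar (AddMonoidAlgebra S M) p :=
    expChar_of_injective_ringHom (f := singleZeroRingHom) single_right_injective p
  conv_lhs => rw [← sum_coeff_single g]
  rw [Finsupp.sum, sum_pow_char]
  simp only [single_pow]

section AddCommGroup

variable [AddCommGroup M]

theorem coeff_mul_pow_char_nsmul_sub (p : ℕ) [ExpChar S p] (A G : AddMonoidAlgebra S M)
    (t u : M) (J : Finset M) (hJ : ∀ w, A.coeff (p • w - u) ≠ 0 → w ∈ J) :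
    (A * G ^ p).coeff (p • t - u) = ∑ w ∈ J, A.coeff (p • w - u) * G.coeff (t - w) ^ p := by
  set h : M → S := fun w => A.coeff (p • w - u) * G.coeff (t - w) ^ p
  calc (A * G ^ p).coeff (p • t - u) = ∑ m ∈ G.coeff.support, h (t - m) := by
        rw [pow_char_eq_sum_single, Finset.mul_sum, coeff_sum, Finsupp.finsetSum_apply]
        refine Finset.sum_congr rfl fun m _ => ?_
        simp only [coeff_mul_single_apply, h, smul_sub, sub_sub_cancel]
        congr 2; abel
    _ = ∑ᶠ m : M, h (t - m) := by
        refine (finsum_eq_sum_of_support_subset _ fun m hm => ?_).symm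
        by_contra hG
        simp [h, Finsupp.notMem_support_iff.mp hG, zero_pow (expChar_pos S p).ne'] at hm
    _ = ∑ᶠ w, h w := finsum_comp_equiv (Equiv.subLeft t)
    _ = ∑ w ∈ J, h w :=
        finsum_eq_sum_of_support_subset _ fun w hw => hJ w (left_ne_zero_of_mul hw)

noncomputable def hasseWittMatrix (p : ℕ) (F : AddMonoidAlgebra S M) (J : Finset M) (s : ℕ) :
    Matrix J J S :=
  Matrix.of fun u v => (F ^ (p ^ s - 1)).coeff (p ^ s • (v : M) - u)

theorem hasseWittMatrix_zero [DecidableEq M] (p : ℕ) (F : AddMonoidAlgebra S M) (J : Finset M) :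
    hasseWittMatrix p F J 0 = 1 := by
  ext u v
  simp only [hasseWittMatrix, Matrix.of_apply, pow_zero, one_smul, Nat.sub_self]
  rw [one_def, coeff_single, Finsupp.single_apply, Matrix.one_apply]
  exact if_congr (by rw [eq_comm, sub_eq_zero, eq_comm, Subtype.ext_iff]) rfl rfl

theorem hasseWittMatrix_succ (p : ℕ) [ExpChar S p] (F : AddMonoidAlgebra S M) (J : Finset M)
    (hJ : ∀ u ∈ J, ∀ w, (F ^ (p - 1)).coeff (p • w - u) ≠ 0 → w ∈ J) (s : ℕ) :
    hasseWittMatrix p F J (s + 1) =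
      hasseWittMatrix p F J 1 * (hasseWittMatrix p F J s).map (frobenius S p) := by
  ext u v
  rw [Matrix.mul_apply, hasseWittMatrix, Matrix.of_apply,
    Nat.pow_succ_sub_one_eq (expChar_pos S p).ne', pow_add, pow_mul, pow_succ', mul_smul,
    coeff_mul_pow_char_nsmul_sub p _ _ _ _ J (hJ u u.2), ← Finset.sum_coe_sort J]
  simp [hasseWittMatrix, frobenius_def]

theorem hasseWittMatrix_eq_prod [DecidableEq M] (p : ℕ) [ExpChar S p] (F : AddMonoidAlgebra S M)
    (J : Finset M) (hJ : ∀ u ∈ J, ∀ w, (F ^ (p - 1)).coeff (p • w - u) ≠ 0 → w ∈ J) (s : ℕ) :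
    hasseWittMatrix p F J s =
      ((List.range s).map fun i => (hasseWittMatrix p F J 1).map (frobenius S p)^[i]).prod :=
  Matrix.eq_prod_map_iterate _ _ (hasseWittMatrix_zero p F J) (hasseWittMatrix_succ p F J hJ) s

end AddCommGroup

end AddMonoidAlgebra

open Pointwise

section Convex

variable {𝕜 E : Type*} [Field 𝕜] [LinearOrder 𝕜] [IsStrictOrderedRing 𝕜] [AddCommGroup E]
  [Module 𝕜 E]

theorem Convex.mem_interior_of_smul_sub_mem_smul [TopologicalSpace E] [IsTopologicalAddGroup E]
    [ContinuousConstSMul 𝕜 E] {Δ : Set E} (hΔ : Convex 𝕜 Δ) {t : 𝕜} (ht : 1 ≤ t) {x w : E}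
    (hx : x ∈ interior Δ) (h : t • w - x ∈ (t - 1) • Δ) : w ∈ interior Δ := by
  obtain ⟨z, hz, hzw : (t - 1) • z = t • w - x⟩ := h
  have ht0 : 0 < t := zero_lt_one.trans_le ht
  have hw : w = t⁻¹ • x + (t⁻¹ * (t - 1)) • z := by
    rw [mul_smul, hzw, smul_sub, smul_smul, inv_mul_cancel₀ ht0.ne', one_smul]
    abel
  rw [hw]
  exact hΔ.combo_interior_self_mem_interior hx hz (inv_pos.2 ht0)
    (mul_nonneg (inv_nonneg.2 ht0.le) (sub_nonneg.2 ht)) (by field_simp; ring)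

theorem AddMonoidAlgebra.map_mem_smul_of_mem_support_pow {S M : Type*} [Semiring S]
    [AddMonoid M] (φ : M →+ E) {g : AddMonoidAlgebra S M} {Δ : Set E} (hΔ : Convex 𝕜 Δ)
    (hg : ∀ m ∈ g.coeff.support, φ m ∈ Δ) {k : ℕ} (hk : k ≠ 0) {m : M}
    (hm : m ∈ (g ^ k).coeff.support) : φ m ∈ (k : 𝕜) • Δ := by
  classical
  induction k generalizing m with
  | zero => contradiction
  | succ k ih =>
    rcases eq_or_ne k 0 with rfl | hk0
    · simpa using hg m (by simpa using hm)
    rw [pow_succ] at hm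
    obtain ⟨a, ha, b, hb, rfl⟩ := Finset.mem_add.mp (support_coeff_mul_subset _ _ hm)
    rw [map_add, Nat.cast_succ, hΔ.add_smul (Nat.cast_nonneg k) zero_le_one, one_smul]
    exact Set.add_mem_add (ih hk0 ha) (hg b hb)

theorem AddMonoidAlgebra.mem_of_coeff_pow_pred_ne_zero [TopologicalSpace E]
    [IsTopologicalAddGroup E] [ContinuousConstSMul 𝕜 E] {S M : Type*} [Semiring S]
    [AddCommGroup M] (φ : M →+ E) {g : AddMonoidAlgebra S M} {Δ : Set E} (hΔ : Convex 𝕜 Δ)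
    (hg : ∀ m ∈ g.coeff.support, φ m ∈ Δ) {J : Finset M}
    (hJ : ∀ u, u ∈ J ↔ φ u ∈ interior Δ) {p : ℕ} (hp : 1 < p) :
    ∀ u ∈ J, ∀ w, (g ^ (p - 1)).coeff (p • w - u) ≠ 0 → w ∈ J := by
  intro u hu w hw
  have hmem := AddMonoidAlgebra.map_mem_smul_of_mem_support_pow (𝕜 := 𝕜) φ hΔ hg (by omega)
    (Finsupp.mem_support_iff.2 hw)
  rw [map_sub, map_nsmul, Nat.cast_sub hp.le, Nat.cast_one, ← Nat.cast_smul_eq_nsmul 𝕜] at hmem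
  rw [hJ] at hu ⊢
  exact hΔ.mem_interior_of_smul_sub_mem_smul (by exact_mod_cast hp.le) hu hmem

end Convex

open AddMonoidAlgebra

theorem higher_hasse_witt_mod_p_general {R : Type*} [CommRing R] {n : ℕ} (p : ℕ) (hp : p.Prime)
    (σ : R →+* R) (hσ : ∀ r : R, σ r - r ^ p ∈ Ideal.span {(p : R)})
    (f : AddMonoidAlgebra R (Fin n → ℤ))
    -- `J` is the set of interior lattice points of the Newton polytope of `f`
    (J : Finset (Fin n → ℤ))
    (hJ : ∀ u : Fin n → ℤ, u ∈ J ↔ (fun i => (u i : ℝ)) ∈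
      interior (convexHull ℝ ((fun (w : Fin n → ℤ) (i : Fin n) => (w i : ℝ)) '' f.coeff.support)))
    (α : ℕ → Matrix J J R)
    (hα : ∀ (s : ℕ) (u v : J), α s u v = (f ^ (p ^ s - 1)).coeff ((p : ℤ) ^ s • (v : Fin n → ℤ) - u))
    (s : ℕ) (u v : J) :
    (α s - ((List.range s).map fun i => (α 1).map (⇑σ)^[i]).prod) u v ∈
      Ideal.span {(p : R)} := by
  set π := Ideal.Quotient.mk (Ideal.span {(p : R)})
  suffices hmod : (α s).map π = (((List.range s).map fun i => (α 1).map (⇑σ)^[i]).prod).map π by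
    rw [← Ideal.Quotient.eq_zero_iff_mem, Matrix.sub_apply, map_sub, sub_eq_zero]
    exact congrFun (congrFun hmod u) v
  nontriviality R ⧸ Ideal.span {(p : R)}
  have : Fact p.Prime := ⟨hp⟩
  have : CharP (R ⧸ Ideal.span {(p : R)}) p := (CharP.charP_iff_prime_eq_zero hp).2 <| by
    simpa [π] using Ideal.Quotient.eq_zero_iff_mem.2 (Ideal.mem_span_singleton_self (p : R))
  set F := mapRingHom (Fin n → ℤ) π f
  have hαF : ∀ s, (α s).map π = hasseWittMatrix p F J s := fun s => by
    ext u v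
    rw [Matrix.map_apply, hα, ← Nat.cast_pow, natCast_zsmul, hasseWittMatrix, Matrix.of_apply,
      ← map_pow, coeff_mapRingHom]
  have hσπ : Function.Semiconj π σ (frobenius _ p) := fun r => by
    rw [frobenius_def, ← map_pow]
    exact Ideal.Quotient.eq.2 (hσ r)
  have hJF := mem_of_coeff_pow_pred_ne_zero (AddMonoidHom.compLeft (Int.castAddHom ℝ) (Fin n))
    (convex_convexHull ℝ _) (fun m hm => subset_convexHull ℝ _
      (Set.mem_image_of_mem _ (support_coeff_mapRingHom_subset π f hm))) hJ hp.one_lt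
  rw [Matrix.map_prod_map_iterate hσπ, hαF, hαF, hasseWittMatrix_eq_prod p F J hJF]

/-- Theorem 1(i) of the paper:
`α_s ≡ α_1 · σ(α_1) · σ²(α_1) ⋯ σ^{s-1}(α_1) mod p`. -/
theorem higher_hasse_witt_mod_p {R : Type*} [CommRing R] {n : ℕ} (p : ℕ) (hp : p.Prime)
    (hchar : ∀ (N : ℕ) (r : R), N ≠ 0 → N • r = 0 → r = 0)
    (σ : R →+* R) (hσ : ∀ r : R, σ r - r ^ p ∈ Ideal.span {(p : R)})
    (f : AddMonoidAlgebra R (Fin n → ℤ))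
    -- `J` is the set of interior lattice points of the Newton polytope of `f`
    (J : Finset (Fin n → ℤ)) (hJne : J.Nonempty)
    (hJ : ∀ u : Fin n → ℤ, u ∈ J ↔ (fun i => (u i : ℝ)) ∈
      interior (convexHull ℝ ((fun (w : Fin n → ℤ) (i : Fin n) => (w i : ℝ)) '' f.coeff.support)))
    (α : ℕ → Matrix J J R)
    (hα : ∀ (s : ℕ) (u v : J), α s u v = (f ^ (p ^ s - 1)).coeff ((p : ℤ) ^ s • (v : Fin n → ℤ) - u))
    (s : ℕ) (hs : 1 ≤ s) (u v : J) :
    (α s - ((List.range s).map fun i => (α 1).map (⇑σ)^[i]).prod) u v ∈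
      Ideal.span {(p : R)} :=
  higher_hasse_witt_mod_p_general p hp σ hσ f J hJ α hα s u v
end

section
/- Let f(x) = 1 + ax + bx² + x³ over ℤ[a,b, 1/disc(f)] where disc(f) = −4(a³+b³) + a²b² + 18ab − 27, and consider the connection ∇ on H' = (R[x]/(f))/R·1 ≅ R·x ⊕ R·x² induced by implicit differentiation of f(x)=0 in a. Then in the basis (x, x²), ∇_{d/da} is given by the matrix (1/disc(f))·[[ab²−3b−2a², 4b²−2a²b+6a],[ab−9, 12b−4a²]], i.e. ∇_{d/da}(x) = (1/disc(f))((ab²−3b−2a²)x + (ab−9)x²) and ∇_{d/da}(x²) = (1/disc(f))((4b²−2a²b+6a)x + (12b−4a²)x²) in H'. -/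
/-! The explicit Bézout relation `A₀·f + B₀·f' = disc` (with `B₀` of degree two) shows that
`f'` is invertible modulo `f` with inverse `B₀/disc`; hence any `B` with `A·f + B·f' = disc`
agrees with `B₀` modulo `f`. The two formulas are then the reductions of `−x·B₀` and
`−2x²·B₀` modulo `f` and the constants. -/

noncomputable section
open Polynomial

/-- The class in `H' = (R[x]/(f))/R·1` of a polynomial `q ∈ R[x]`. -/
def cls (Rl : Type*) [CommRing Rl] (f q : Polynomial Rl) :
    (Polynomial Rl ⧸ Ideal.span {f}) ⧸
      (Submodule.span Rl {(1 : Polynomial Rl ⧸ Ideal.span {f})}) :=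
  Submodule.Quotient.mk (Ideal.Quotient.mk (Ideal.span {f}) q)

section Quotient

variable {R : Type*} [CommRing R]

theorem Ideal.Quotient.mk_span_eq_of_bezout {f g A A' B B' : R[X]} {d : R} (hd : IsUnit d)
    (h : A * f + B * g = C d) (h' : A' * f + B' * g = C d) :
    Ideal.Quotient.mk (Ideal.span {f}) B = Ideal.Quotient.mk (Ideal.span {f}) B' := by
  set π := Ideal.Quotient.mk (Ideal.span {f})
  have hf : π f = 0 := Ideal.Quotient.mk_singleton_self f
  have hB : π B * π g = π (C d) := by simpa [hf] using congrArg π h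
  have hB' : π B' * π g = π (C d) := by simpa [hf] using congrArg π h'
  have hg : IsUnit (π g) := isUnit_of_mul_isUnit_right (hB ▸ (hd.map C).map π)
  exact hg.mul_right_cancel (hB.trans hB'.symm)

theorem cls_mul_congr_right {f B B' : R[X]} (p : R[X])
    (h : Ideal.Quotient.mk (Ideal.span {f}) B = Ideal.Quotient.mk (Ideal.span {f}) B') :
    cls R f (p * B) = cls R f (p * B') := by
  simp only [cls, map_mul, h]

theorem cls_eq_of_eq_add_C_add_mul {f p q : R[X]} (c : R) (g : R[X])
    (h : p = q + C c + g * f) : cls R f p = cls R f q := by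
  have hC : Ideal.Quotient.mk (Ideal.span {f}) (C c) = c • 1 := by
    rw [← mul_one (C c), ← smul_eq_C_mul]
    rfl
  rw [cls, cls, Submodule.Quotient.eq, h, map_add, map_add, map_mul,
    Ideal.Quotient.mk_singleton_self, mul_zero, add_zero, add_sub_cancel_left, hC]
  exact Submodule.smul_mem _ c (Submodule.mem_span_singleton_self 1)

end Quotient

section Cubic

variable {R : Type*} [CommRing R] (a b : R)

def cubic : R[X] := C 1 + C a * X + C b * X ^ 2 + X ^ 3

def cubicDisc : R := -4 * (a ^ 3 + b ^ 3) + a ^ 2 * b ^ 2 + 18 * a * b - 27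

def cubicBezoutA : R[X] := C (15 * a * b - 4 * b ^ 3 - 27) + C (18 * a - 6 * b ^ 2) * X

def cubicBezoutB : R[X] :=
  C (a * b ^ 2 - 4 * a ^ 2 + 3 * b) + C (2 * b ^ 3 - 7 * a * b + 9) * X +
    C (2 * b ^ 2 - 6 * a) * X ^ 2

theorem derivative_cubic : derivative (cubic a b) = C a + 2 * C b * X + 3 * X ^ 2 := by
  simp only [cubic, derivative_add, derivative_mul, derivative_C, derivative_X, derivative_X_pow,
    Nat.cast_ofNat, map_ofNat]
  ring

theorem cubic_bezout :
    cubicBezoutA a b * cubic a b + cubicBezoutB a b * derivative (cubic a b) =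
      C (cubicDisc a b) := by
  rw [derivative_cubic]
  simp only [cubicBezoutA, cubicBezoutB, cubic, cubicDisc, map_add, map_mul, map_sub, map_pow,
    map_neg, map_ofNat, map_one]
  ring

theorem cls_neg_X_mul_cubicBezoutB :
    cls R (cubic a b) (-(X * cubicBezoutB a b)) =
      cls R (cubic a b) (C (a * b ^ 2 - 3 * b - 2 * a ^ 2) * X + C (a * b - 9) * X ^ 2) := by
  apply cls_eq_of_eq_add_C_add_mul (2 * b ^ 2 - 6 * a) (C (6 * a - 2 * b ^ 2))
  simp only [cubicBezoutB, cubic, map_add, map_mul, map_sub, map_pow, map_ofNat, map_one]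
  ring

theorem cls_neg_two_X_sq_mul_cubicBezoutB :
    cls R (cubic a b) (-(2 * X ^ 2 * cubicBezoutB a b)) =
      cls R (cubic a b) (C (4 * b ^ 2 - 2 * a ^ 2 * b + 6 * a) * X +
        C (12 * b - 4 * a ^ 2) * X ^ 2) := by
  apply cls_eq_of_eq_add_C_add_mul (18 - 2 * a * b)
    (C (2 * a * b - 18) + C (12 * a - 4 * b ^ 2) * X)
  simp only [cubicBezoutB, cubic, map_add, map_mul, map_sub, map_pow, map_ofNat, map_one]
  ring

end Cubic

theorem connection_on_cubic_general (Rl : Type*) [CommRing Rl]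
    [Algebra (MvPolynomial (Fin 2) ℤ) Rl]
    (disc : MvPolynomial (Fin 2) ℤ)
    (hdisc : disc =
      -4 * ((MvPolynomial.X 0) ^ 3 + (MvPolynomial.X 1) ^ 3) +
        (MvPolynomial.X 0) ^ 2 * (MvPolynomial.X 1) ^ 2 +
        18 * (MvPolynomial.X 0) * (MvPolynomial.X 1) - 27)
    (av bv : Rl)
    (hav : av = algebraMap (MvPolynomial (Fin 2) ℤ) Rl (MvPolynomial.X 0))
    (hbv : bv = algebraMap (MvPolynomial (Fin 2) ℤ) Rl (MvPolynomial.X 1))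
    -- `1/disc ∈ Rl`
    (invd : Rl) (hinvd : invd * algebraMap (MvPolynomial (Fin 2) ℤ) Rl disc = 1)
    (f : Polynomial Rl) (hf : f = C 1 + C av * X + C bv * X ^ 2 + X ^ 3)
    -- `A₀ f + B f' = disc`, so that `1/f'(x) ≡ B(x)/disc mod f`
    (A₀ B : Polynomial Rl)
    (hAB : A₀ * f + B * derivative f = C (algebraMap (MvPolynomial (Fin 2) ℤ) Rl disc)) :
    invd • cls Rl f (-(X * B)) =
        invd • cls Rl f (C (av * bv ^ 2 - 3 * bv - 2 * av ^ 2) * X + C (av * bv - 9) * X ^ 2) ∧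
      invd • cls Rl f (-(2 * X ^ 2 * B)) =
        invd • cls Rl f (C (4 * bv ^ 2 - 2 * av ^ 2 * bv + 6 * av) * X +
          C (12 * bv - 4 * av ^ 2) * X ^ 2) := by
  have hd : algebraMap (MvPolynomial (Fin 2) ℤ) Rl disc = cubicDisc av bv := by
    simp only [hdisc, hav, hbv, cubicDisc, map_add, map_mul, map_sub, map_pow, map_neg, map_ofNat]
  rw [hd] at hinvd hAB
  rw [← cubic] at hf
  subst hf
  have hB := Ideal.Quotient.mk_span_eq_of_bezout (.of_mul_eq_one_right _ hinvd) hAB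
    (cubic_bezout av bv)
  rw [← neg_mul, cls_mul_congr_right _ hB, neg_mul, cls_neg_X_mul_cubicBezoutB,
    ← neg_mul, cls_mul_congr_right _ hB, neg_mul, cls_neg_two_X_sq_mul_cubicBezoutB]
  exact ⟨rfl, rfl⟩

theorem connection_on_cubic (Rl : Type*) [CommRing Rl]
    [Algebra (MvPolynomial (Fin 2) ℤ) Rl]
    (disc : MvPolynomial (Fin 2) ℤ)
    (hdisc : disc =
      -4 * ((MvPolynomial.X 0) ^ 3 + (MvPolynomial.X 1) ^ 3) +
        (MvPolynomial.X 0) ^ 2 * (MvPolynomial.X 1) ^ 2 +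
        18 * (MvPolynomial.X 0) * (MvPolynomial.X 1) - 27)
    -- `Rl = ℤ[a,b][1/disc]`
    [IsLocalization.Away disc Rl]
    (av bv : Rl)
    (hav : av = algebraMap (MvPolynomial (Fin 2) ℤ) Rl (MvPolynomial.X 0))
    (hbv : bv = algebraMap (MvPolynomial (Fin 2) ℤ) Rl (MvPolynomial.X 1))
    -- `1/disc ∈ Rl`
    (invd : Rl) (hinvd : invd * algebraMap (MvPolynomial (Fin 2) ℤ) Rl disc = 1)
    (f : Polynomial Rl) (hf : f = C 1 + C av * X + C bv * X ^ 2 + X ^ 3)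
    -- `A₀ f + B f' = disc`, so that `1/f'(x) ≡ B(x)/disc mod f`
    (A₀ B : Polynomial Rl)
    (hAB : A₀ * f + B * derivative f = C (algebraMap (MvPolynomial (Fin 2) ℤ) Rl disc)) :
    invd • cls Rl f (-(X * B)) =
        invd • cls Rl f (C (av * bv ^ 2 - 3 * bv - 2 * av ^ 2) * X + C (av * bv - 9) * X ^ 2) ∧
      invd • cls Rl f (-(2 * X ^ 2 * B)) =
        invd • cls Rl f (C (4 * bv ^ 2 - 2 * av ^ 2 * bv + 6 * av) * X +
          C (12 * bv - 4 * av ^ 2) * X ^ 2) :=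
  connection_on_cubic_general Rl disc hdisc av bv hav hbv invd hinvd f hf A₀ B hAB

end
end

section
/- Let R = ℤ_q (q = p^k) with Frobenius σ satisfying σ^k = id, and suppose the matrices α_s and constants c_1,...,c_r ∈ ℤ satisfy: (a) α_{s+1}·σ(α_s)^{-1} ≡ α_s·σ(α_{s−1})^{-1} mod p^s for all s ≥ 1 (so Φ := lim_{s→∞} α_s·α_{s−k}^{-1} exists p-adically), and (b) α_s + c_1·α_{s−k} + c_2·α_{s−2k} + ... + c_r·α_{s−rk} ≡ 0 mod p^{s−c} for all sufficiently large s and some fixed constant c. Then Φ^r + c_1·Φ^{r−1} + ... + c_r·I = 0. -/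
/-!
Reduce modulo `p^N`. For large `s` the limit relation becomes the exact recurrence
`Φ·α_{s-k} = α_s`, so `Φ^j·α_{s-jk} = α_s`, and multiplying `Φ^r + ∑ cᵢ Φ^{r-i}` on the right
by `α_{s-rk}` produces `α_s + ∑ cᵢ α_{s-ik}`, which vanishes mod `p^N` by (b). Since `α_{s-rk}` is
invertible (its determinant is a unit mod `p`, hence a unit of the local ring `ℤ_q`), the
polynomial in `Φ` vanishes mod every `p^N`, hence is `0` by Krull's intersection theorem.
-/

open Finset

section Recurrence

variable {A : Type*} [Ring A] (Φ : A) (a : ℕ → A) {k S : ℕ}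

theorem pow_mul_sub_eq_of_mul_sub_eq (h : ∀ s, S ≤ s → Φ * a (s - k) = a s) (j : ℕ) {s : ℕ}
    (hs : S + j * k ≤ s) : Φ ^ j * a (s - j * k) = a s := by
  induction j generalizing s with
  | zero => simp
  | succ j ih =>
    rw [add_mul, one_mul] at hs
    have hidx : s - (j + 1) * k = s - k - j * k := by rw [add_mul, one_mul]; omega
    rw [hidx, pow_succ', mul_assoc, ih (by omega), h s (by omega)]

theorem recurrence_poly_mul_eq (c : ℕ → ℤ) (h : ∀ s, S ≤ s → Φ * a (s - k) = a s) {r s : ℕ}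
    (hs : S + r * k ≤ s) :
    (Φ ^ r + ∑ i ∈ Icc 1 r, c i • Φ ^ (r - i)) * a (s - r * k) =
      a s + ∑ i ∈ Icc 1 r, c i • a (s - i * k) := by
  rw [add_mul, sum_mul, pow_mul_sub_eq_of_mul_sub_eq Φ a h r hs]
  congr 1
  refine sum_congr rfl fun i hi => ?_
  have hir : i ≤ r := (mem_Icc.1 hi).2
  have hik : i * k + (r - i) * k = r * k := by rw [← add_mul, Nat.add_sub_cancel' hir]
  have hidx : s - i * k - (r - i) * k = s - r * k := by omega
  rw [smul_mul_assoc, ← hidx,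
    pow_mul_sub_eq_of_mul_sub_eq Φ a h (r - i) (by omega)]

theorem recurrence_poly_eq_zero (c : ℕ → ℤ) (h : ∀ s, S ≤ s → Φ * a (s - k) = a s) {r s : ℕ}
    (hs : S + r * k ≤ s) (hunit : IsUnit (a (s - r * k)))
    (hrel : a s + ∑ i ∈ Icc 1 r, c i • a (s - i * k) = 0) :
    Φ ^ r + ∑ i ∈ Icc 1 r, c i • Φ ^ (r - i) = 0 :=
  hunit.mul_left_eq_zero.1 ((recurrence_poly_mul_eq Φ a c h hs).trans hrel)

end Recurrence

namespace Matrix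

variable {R : Type*} [CommRing R] {n : Type*}

theorem map_mk_eq_zero_iff {m : Type*} {I : Ideal R} {M : Matrix m n R} :
    M.map (Ideal.Quotient.mk I) = 0 ↔ ∀ u v, M u v ∈ I := by
  simp [← Matrix.ext_iff, Ideal.Quotient.eq_zero_iff_mem]

theorem isUnit_of_isUnit_map_mk [IsLocalRing R] [Fintype n] [DecidableEq n] {I : Ideal R}
    (hI : I ≠ ⊤) {M : Matrix n n R} (h : IsUnit (M.map (Ideal.Quotient.mk I))) : IsUnit M := by
  have := Ideal.Quotient.nontrivial_iff.2 hI
  have := IsLocalHom.of_surjective (Ideal.Quotient.mk I) Ideal.Quotient.mk_surjective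
  rw [isUnit_iff_isUnit_det] at h ⊢
  rw [← RingHom.mapMatrix_apply, ← RingHom.map_det] at h
  exact (isUnit_map_iff _ _).1 h

theorem eq_zero_of_forall_map_mk_span_pow_eq_zero [IsNoetherianRing R] [IsDomain R] {x : R}
    (hx : ¬IsUnit x) {M : Matrix n n R}
    (h : ∀ N : ℕ, M.map (Ideal.Quotient.mk (Ideal.span {x ^ N})) = 0) : M = 0 := by
  have hbot := Ideal.iInf_pow_eq_bot_of_isDomain (Ideal.span {x})
    (mt Ideal.span_singleton_eq_top.1 hx)
  ext u v
  rw [zero_apply, ← Ideal.mem_bot, ← hbot, Ideal.mem_iInf]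
  intro N
  rw [Ideal.span_singleton_pow]
  exact map_mk_eq_zero_iff.1 (h N) u v

end Matrix

theorem asd_limit_matrix_annihilated_general (p k g r : ℕ) [Fact p.Prime]
    (α : ℕ → Matrix (Fin g) (Fin g) (WittVector p (GaloisField p k)))
    -- the reductions of the `α_s` mod `p` are invertible
    (hinv : ∀ s : ℕ, IsUnit ((α s).map
      (Ideal.Quotient.mk (Ideal.span {(p : WittVector p (GaloisField p k))}))))
    -- `Φ = lim_{s→∞} α_s·α_{s-k}⁻¹`
    (Φ : Matrix (Fin g) (Fin g) (WittVector p (GaloisField p k)))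
    (hΦ : ∀ N : ℕ, ∃ S : ℕ, ∀ s : ℕ, S ≤ s → ∀ u v : Fin g,
      (Φ * α (s - k) - α s) u v ∈
        Ideal.span {(p : WittVector p (GaloisField p k)) ^ N})
    -- (b) the Atkin–Swinnerton-Dyer congruences with integer constants `c₁,…,c_r`
    (c : ℕ → ℤ)
    (hb : ∃ (C S : ℕ), ∀ s : ℕ, S ≤ s → r * k + C ≤ s → ∀ u v : Fin g,
      (α s + ∑ i ∈ Finset.Icc 1 r, c i • α (s - i * k)) u v ∈
        Ideal.span {(p : WittVector p (GaloisField p k)) ^ (s - C)}) :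
    Φ ^ r + ∑ i ∈ Finset.Icc 1 r, c i • Φ ^ (r - i) = 0 := by
  have hp : ¬IsUnit (p : WittVector p (GaloisField p k)) := (WittVector.irreducible p).not_isUnit
  have hα : ∀ t, IsUnit (α t) := fun t =>
    Matrix.isUnit_of_isUnit_map_mk (mt Ideal.span_singleton_eq_top.1 hp) (hinv t)
  obtain ⟨C, Sb, hb⟩ := hb
  refine Matrix.eq_zero_of_forall_map_mk_span_pow_eq_zero hp fun N => ?_
  set f := (Ideal.Quotient.mk (Ideal.span {(p : WittVector p (GaloisField p k)) ^ N})).mapMatrix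
    (m := Fin g)
  obtain ⟨S, hS⟩ := hΦ N
  have hrec : ∀ s, S ≤ s → f Φ * f (α (s - k)) = f (α s) := fun s hs => by
    rw [← map_mul, ← sub_eq_zero, ← map_sub]
    exact Matrix.map_mk_eq_zero_iff.2 (hS s hs)
  set s := S + Sb + r * k + C + N
  have hrel : f (α s + ∑ i ∈ Finset.Icc 1 r, c i • α (s - i * k)) = 0 :=
    Matrix.map_mk_eq_zero_iff.2 fun u v =>
      Ideal.span_singleton_le_span_singleton.2 (pow_dvd_pow _ (by omega))
        (hb s (by omega) (by omega) u v)
  have hpoly := recurrence_poly_eq_zero (f Φ) (fun t => f (α t)) c hrec (r := r) (s := s) (by omega)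
    ((hα _).map f) (by simpa only [map_add, map_sum, map_zsmul] using hrel)
  rw [← RingHom.mapMatrix_apply]
  simpa only [map_add, map_sum, map_zsmul, map_pow] using hpoly

/-- the Atkin–Swinnerton-Dyer argument of Section 5.  Here
`O = W(𝔽_q) = ℤ_q` (`q = p^k`) is modelled by Witt vectors over the Galois field
with `p^k` elements, `σ` is a Frobenius lift with `σ^k = id`, and `α_s` is a sequence
of `g×g` matrices over `O` whose reductions mod `p` are invertible.  Hypothesis (a)
is the congruence `α_{s+1}·σ(α_s)⁻¹ ≡ α_s·σ(α_{s−1})⁻¹ mod p^s` (stated over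
`O/p^s O`), `Φ` is the `p`-adic limit of `α_s·α_{s−k}⁻¹` (stated via
`Φ·α_{s−k} ≡ α_s mod p^N` for `s` large), and hypothesis (b) is the generalized
Atkin–Swinnerton-Dyer congruence.  Conclusion: `Φ^r + c₁Φ^{r−1} + ⋯ + c_r·1 = 0`. -/
theorem asd_limit_matrix_annihilated (p k g r : ℕ) [Fact p.Prime] (hk : 1 ≤ k) (hr : 1 ≤ r)
    (σ : WittVector p (GaloisField p k) →+* WittVector p (GaloisField p k))
    (hσfrob : ∀ x : WittVector p (GaloisField p k),
      σ x - x ^ p ∈ Ideal.span {(p : WittVector p (GaloisField p k))})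
    (hσk : (⇑σ)^[k] = id)
    (α : ℕ → Matrix (Fin g) (Fin g) (WittVector p (GaloisField p k)))
    -- the reductions of the `α_s` mod `p` are invertible
    (hinv : ∀ s : ℕ, IsUnit ((α s).map
      (Ideal.Quotient.mk (Ideal.span {(p : WittVector p (GaloisField p k))}))))
    -- (a) `α_{s+1}·σ(α_s)⁻¹ ≡ α_s·σ(α_{s-1})⁻¹ mod p^s`
    (ha : ∀ s : ℕ, 1 ≤ s →
      ((α (s + 1)).map (Ideal.Quotient.mk
          (Ideal.span {(p : WittVector p (GaloisField p k)) ^ s}))) *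
        (((α s).map ⇑σ).map (Ideal.Quotient.mk
          (Ideal.span {(p : WittVector p (GaloisField p k)) ^ s})))⁻¹ =
      ((α s).map (Ideal.Quotient.mk
          (Ideal.span {(p : WittVector p (GaloisField p k)) ^ s}))) *
        (((α (s - 1)).map ⇑σ).map (Ideal.Quotient.mk
          (Ideal.span {(p : WittVector p (GaloisField p k)) ^ s})))⁻¹)
    -- `Φ = lim_{s→∞} α_s·α_{s-k}⁻¹`
    (Φ : Matrix (Fin g) (Fin g) (WittVector p (GaloisField p k)))
    (hΦ : ∀ N : ℕ, ∃ S : ℕ, ∀ s : ℕ, S ≤ s → ∀ u v : Fin g,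
      (Φ * α (s - k) - α s) u v ∈
        Ideal.span {(p : WittVector p (GaloisField p k)) ^ N})
    -- (b) the Atkin–Swinnerton-Dyer congruences with integer constants `c₁,…,c_r`
    (c : ℕ → ℤ)
    (hb : ∃ (C S : ℕ), ∀ s : ℕ, S ≤ s → r * k + C ≤ s → ∀ u v : Fin g,
      (α s + ∑ i ∈ Finset.Icc 1 r, c i • α (s - i * k)) u v ∈
        Ideal.span {(p : WittVector p (GaloisField p k)) ^ (s - C)}) :
    Φ ^ r + ∑ i ∈ Finset.Icc 1 r, c i • Φ ^ (r - i) = 0 :=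
  asd_limit_matrix_annihilated_general p k g r α hinv Φ hΦ c hb
end
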